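/- arXiv:2209.06630 — 3 statements merged into one kernel-verified Lean document; each statement's English description precedes it below -/
import Mathlib

section
/- Let Φ be a Banach function space over (ℝ, dt) such that the Hardy–Littlewood maximal operator M is bounded on Φ and on its Köthe dual Φ'. Let p ∈ (1,∞). For g ∈ Φ with g ≠ 0 and h ∈ Φ' with h ≠ 0, define w := (ℛg)^{1−p} · ℛ'h, where ℛ and ℛ' are the Rubio de Francia iteration operators built from M on Φ and Φ' respectively. Then w is a Muckenhoupt A_p weight with [w]_{A_p} ≤ 2^p ‖M‖_Φ^{p−1} ‖M‖_{Φ'}. -/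
open MeasureTheory Filter Topology
open scoped ENNReal NNReal

noncomputable section

/-- The (uncentered) Hardy–Littlewood maximal operator on `ℝ`. -/
def HLM (g : ℝ → ℝ) (x : ℝ) : ℝ :=
  sSup {r : ℝ | ∃ a b : ℝ, a < b ∧ x ∈ Set.Icc a b ∧
    r = (b - a)⁻¹ * ∫ t in Set.Ioc a b, |g t|}

/-- A Banach function space over `(ℝ, dt)`: an order ideal of `L⁰` with a lattice norm
and the Fatou property. -/
structure BFS where
  Mem : (ℝ → ℝ) → Prop
  N : (ℝ → ℝ) → ℝ
  mem_meas : ∀ f, Mem f → AEStronglyMeasurable f volume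
  mem_congr : ∀ f g, Mem f → f =ᵐ[volume] g → Mem g
  norm_congr : ∀ f g, f =ᵐ[volume] g → N f = N g
  norm_nonneg' : ∀ f, 0 ≤ N f
  norm_eq_zero' : ∀ f, Mem f → (N f = 0 ↔ f =ᵐ[volume] (fun _ => (0:ℝ)))
  add_mem : ∀ f g, Mem f → Mem g → Mem (f + g)
  norm_add_le' : ∀ f g, Mem f → Mem g → N (f + g) ≤ N f + N g
  smul_mem : ∀ (c : ℝ) (f), Mem f → Mem (c • f)
  norm_smul' : ∀ (c : ℝ) (f), N (c • f) = |c| * N f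
  ideal : ∀ f g, AEStronglyMeasurable f volume → Mem g →
    (∀ᵐ t ∂volume, |f t| ≤ |g t|) → Mem f
  ideal_norm : ∀ f g, Mem f → Mem g → (∀ᵐ t ∂volume, |f t| ≤ |g t|) → N f ≤ N g
  fatou : ∀ (u : ℕ → ℝ → ℝ) (f : ℝ → ℝ) (c : ℝ),
    (∀ n, Mem (u n)) → (∀ n, N (u n) ≤ c) →
    (∀ n, ∀ᵐ t ∂volume, 0 ≤ u n t ∧ u n t ≤ u (n + 1) t) →
    (∀ᵐ t ∂volume, Tendsto (fun n => u n t) atTop (𝓝 (f t))) →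
    Mem f ∧ N f ≤ c

/-- Membership in the Köthe dual `Φ'` of a Banach function space. -/
def kMem (Φ : BFS) (g : ℝ → ℝ) : Prop :=
  AEStronglyMeasurable g volume ∧ ∀ f, Φ.Mem f → Integrable (fun t => f t * g t) volume

/-- Norm in the Köthe dual `Φ'` of a Banach function space. -/
def kN (Φ : BFS) (g : ℝ → ℝ) : ℝ :=
  sSup {r : ℝ | ∃ f, Φ.Mem f ∧ Φ.N f ≤ 1 ∧ r = ∫ t, |f t * g t|}

/-- The Hardy–Littlewood maximal operator is bounded, with constant `C`, on the
(abstract) function space described by the membership predicate `Mem` and norm `Nn`. -/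
def MBoundedOn (Mem : (ℝ → ℝ) → Prop) (Nn : (ℝ → ℝ) → ℝ) (C : ℝ) : Prop :=
  ∀ f, Mem f → Mem (HLM f) ∧ Nn (HLM f) ≤ C * Nn f

/-- The Rubio de Francia iteration operator `ℛg = ∑ₖ Mᵏ|g| / (2C)ᵏ`, built from the
Hardy–Littlewood maximal operator, where `C` is a bound for `M` on the space at hand. -/
def RdF (C : ℝ) (g : ℝ → ℝ) : ℝ → ℝ :=
  fun t => ∑' k : ℕ, (fun h => HLM h)^[k] (fun s => |g s|) t / (2 * C) ^ k

/-- `w` is a Muckenhoupt `A₁` weight with `A₁`-constant at most `c`. -/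
def IsA1 (w : ℝ → ℝ) (c : ℝ) : Prop :=
  (∀ᵐ t ∂volume, 0 < w t) ∧ ∀ᵐ t ∂volume, HLM w t ≤ c * w t

/-- The `A_p` ratio of a weight `w` over the interval `(a, b)`. -/
def apRatio (p : ℝ) (w : ℝ → ℝ) (a b : ℝ) : ℝ :=
  ((b - a)⁻¹ * ∫ t in Set.Ioc a b, w t) *
    ((b - a)⁻¹ * ∫ t in Set.Ioc a b, (w t) ^ (-(p - 1)⁻¹)) ^ (p - 1)

/-- `w` is a Muckenhoupt `A_p` weight with `[w]_{A_p} ≤ c`. -/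
def IsAp (p : ℝ) (w : ℝ → ℝ) (c : ℝ) : Prop :=
  (∀ᵐ t ∂volume, 0 < w t) ∧ LocallyIntegrable w volume ∧
    ∀ a b : ℝ, a < b → apRatio p w a b ≤ c

namespace BFS
/-- Property (P4) of Bennett–Sharpley: characteristic functions of finite-measure sets
belong to `Φ`. Property (P5): `∫_E |f| ≤ C_E ‖f‖_Φ`. -/
structure IsBS (Φ : BFS) : Prop where
  indicator_mem : ∀ E : Set ℝ, MeasurableSet E → volume E < ⊤ →
    Φ.Mem (Set.indicator E fun _ => (1:ℝ))
  loc_int : ∀ E : Set ℝ, MeasurableSet E → volume E < ⊤ →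
    ∃ Ce : ℝ, ∀ f, Φ.Mem f → IntegrableOn f E volume ∧ ∫ t in E, |f t| ≤ Ce * Φ.N f
end BFS

/-!
Averages over an interval `I ∋ t` are dominated by `M` at `t`, so averaging the series
`ℛg = ∑ₖ Mᵏ|g| / (2C₁)ᵏ` term by term shifts it by one term:
`⨍_I ℛg ≤ ∑ₖ Mᵏ⁺¹|g|(t) / (2C₁)ᵏ ≤ 2C₁ ℛg(t)`, i.e. `ℛg` is an `A₁` weight with constant `2C₁`,
and likewise `ℛ'h` with `2C₂`. The series converge in `L¹_loc` because `∫_I Mᵏ|g| ≤ K_I C₁ᵏ`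
(by (P5) in `Φ`, and in `Φ'` by Hölder's inequality, once the Fatou property shows that the
Köthe dual norm is finite). If `u, v` are `A₁` weights then `u ≥ ⨍_I u / [u]` and
`v ≥ ⨍_I v / [v]` a.e. on `I`, which bounds both factors of the `A_p` ratio of `u^{1-p} v` and
gives `[u^{1-p} v]_{A_p} ≤ [u]^{p-1} [v]`.

Since `M f t` is an `sSup` that is `0` where the averages are unbounded, the domination by `M` is
only available where the averages of `f` are bounded. This holds a.e. as soon as `f` is locally
integrable (Lebesgue points, for short intervals) and integrable against
`(2|t| + 2)⁻¹ ≤ M 1_{(0,1]}(t)` (for long ones); that weight lies in `Φ` and in `Φ'` because `M`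
is bounded on both.
-/

open Set

section Intervals

def intervalAverage (f : ℝ → ℝ) (a b : ℝ) : ℝ :=
  (b - a)⁻¹ * ∫ t in Ioc a b, f t

lemma ae_of_forall_ae_restrict_Ioc {P : ℝ → Prop}
    (h : ∀ a b : ℝ, a < b → ∀ᵐ t ∂volume.restrict (Ioc a b), P t) : ∀ᵐ t, P t := by
  rw [← Measure.restrict_univ (μ := volume), ← iUnion_Ioc_add_intCast (0 : ℝ),
    ae_restrict_iUnion_iff]
  exact fun n => h _ _ (by linarith)

lemma locallyIntegrable_of_forall_integrableOn_Ioc {f : ℝ → ℝ}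
    (h : ∀ a b : ℝ, IntegrableOn f (Ioc a b)) : LocallyIntegrable f := by
  refine locallyIntegrable_iff.2 fun K hK => ?_
  obtain ⟨a, ha⟩ := hK.bddBelow
  obtain ⟨b, hb⟩ := hK.bddAbove
  exact (h (a - 1) b).mono_set fun x hx => ⟨by linarith [ha hx], hb hx⟩

lemma MeasureTheory.LocallyIntegrable.integrableOn_Ioc {f : ℝ → ℝ} (hf : LocallyIntegrable f)
    (a b : ℝ) : IntegrableOn f (Ioc a b) :=
  (hf.integrableOn_isCompact isCompact_Icc).mono_set Ioc_subset_Icc_self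

lemma intervalAverage_pos {f : ℝ → ℝ} {a b : ℝ} (hab : a < b)
    (hf : IntegrableOn f (Ioc a b)) (hpos : ∀ᵐ t, 0 < f t) : 0 < intervalAverage f a b := by
  have hsupp : Function.support f =ᵐ[volume] (univ : Set ℝ) := by
    refine ae_eq_univ.2 (measure_mono_null (fun t ht => ?_) (ae_iff.1 hpos))
    exact fun h0 => ht (Function.mem_support.2 (ne_of_gt h0))
  refine mul_pos (inv_pos.2 (sub_pos.2 hab)) ?_
  rw [setIntegral_pos_iff_support_of_nonneg_ae (ae_restrict_of_ae (hpos.mono fun _ h => h.le)) hf,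
    measure_congr (inter_ae_eq_right_of_ae_eq_univ hsupp), Real.volume_Ioc]
  exact ENNReal.ofReal_pos.2 (sub_pos.2 hab)

lemma integrableOn_and_intervalAverage_le_of_ae_le {f g : ℝ → ℝ} {a b K : ℝ} (hab : a ≤ b)
    (hg : IntegrableOn g (Ioc a b)) (hf : AEStronglyMeasurable f (volume.restrict (Ioc a b)))
    (hf0 : ∀ᵐ t ∂volume.restrict (Ioc a b), 0 ≤ f t)
    (hfg : ∀ᵐ t ∂volume.restrict (Ioc a b), f t ≤ K * g t) :
    IntegrableOn f (Ioc a b) ∧ intervalAverage f a b ≤ K * intervalAverage g a b := by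
  have hKg : IntegrableOn (fun t => K * g t) (Ioc a b) := hg.const_mul K
  have hfint : IntegrableOn f (Ioc a b) := hKg.mono' hf (by
    filter_upwards [hf0, hfg] with t h0 hle
    rwa [Real.norm_eq_abs, abs_of_nonneg h0])
  refine ⟨hfint, ?_⟩
  rw [intervalAverage, intervalAverage, mul_left_comm K, ← integral_const_mul K]
  exact mul_le_mul_of_nonneg_left (integral_mono_ae hfint hKg hfg)
    (inv_nonneg.2 (sub_nonneg.2 hab))

lemma exists_setIntegral_Ioc_abs_pos {f : ℝ → ℝ} (hf : LocallyIntegrable fun t => |f t|)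
    (hf0 : ¬ f =ᵐ[volume] fun _ => (0 : ℝ)) :
    ∃ a b : ℝ, a < b ∧ 0 < ∫ t in Ioc a b, |f t| := by
  by_contra! hzero
  refine hf0 (ae_of_forall_ae_restrict_Ioc fun a b hab => ?_)
  have hint : ∫ t in Ioc a b, |f t| = 0 :=
    le_antisymm (hzero a b hab) (setIntegral_nonneg measurableSet_Ioc fun _ _ => abs_nonneg _)
  filter_upwards [(setIntegral_eq_zero_iff_of_nonneg_ae
    (Eventually.of_forall fun _ => abs_nonneg _) (hf.integrableOn_Ioc a b)).1 hint] with t ht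
  exact abs_eq_zero.1 ht

end Intervals

section Series

variable {ι α E : Type*} [MeasurableSpace α] {μ : Measure α}
  [NormedAddCommGroup E] {F : ι → α → E}

lemma tsum_lintegral_enorm_ne_top (hF : ∀ k, Integrable (F k) μ)
    (hsum : Summable fun k => ∫ a, ‖F k a‖ ∂μ) : ∑' k, ∫⁻ a, ‖F k a‖ₑ ∂μ ≠ ⊤ := by
  simp_rw [← ofReal_integral_norm_eq_lintegral_enorm (hF _)]
  rw [← ENNReal.ofReal_tsum_of_nonneg (fun k => integral_nonneg fun _ => norm_nonneg _) hsum]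
  exact ENNReal.ofReal_ne_top

lemma ae_summable_of_summable_integral_norm [Countable ι] [CompleteSpace E]
    (hF : ∀ k, Integrable (F k) μ) (hsum : Summable fun k => ∫ a, ‖F k a‖ ∂μ) :
    ∀ᵐ a ∂μ, Summable fun k => F k a := by
  refine (summable_norm_of_tsum_eLpNorm_ne_top le_rfl (fun k => (hF k).1) ?_).mono
    fun _ h => h.of_norm
  simp_rw [eLpNorm_one_eq_lintegral_enorm]
  exact tsum_lintegral_enorm_ne_top hF hsum

lemma integrable_tsum_of_summable_integral_norm [Countable ι] [CompleteSpace E]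
    (hF : ∀ k, Integrable (F k) μ) (hsum : Summable fun k => ∫ a, ‖F k a‖ ∂μ) :
    Integrable (fun a => ∑' k, F k a) μ := by
  refine ⟨AEStronglyMeasurable.tsum fun k => (hF k).1, ?_⟩
  calc ∫⁻ a, ‖∑' k, F k a‖ₑ ∂μ ≤ ∫⁻ a, ∑' k, ‖F k a‖ₑ ∂μ :=
        lintegral_mono fun _ => enorm_tsum_le_tsum_enorm
    _ = ∑' k, ∫⁻ a, ‖F k a‖ₑ ∂μ := lintegral_tsum fun k => (hF k).1.enorm
    _ < ⊤ := (tsum_lintegral_enorm_ne_top hF hsum).lt_top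

end Series

lemma ae_summable_of_summable_setIntegral_Ioc {v : ℕ → ℝ → ℝ}
    (hv : ∀ k (a b : ℝ), IntegrableOn (v k) (Ioc a b))
    (hsum : ∀ a b : ℝ, Summable fun k => ∫ t in Ioc a b, |v k t|) :
    ∀ᵐ t, Summable fun k => v k t :=
  ae_of_forall_ae_restrict_Ioc fun a b _ =>
    ae_summable_of_summable_integral_norm (fun k => hv k a b) (hsum a b)

section Maximal

def intervalAverages (f : ℝ → ℝ) (x : ℝ) : Set ℝ :=
  {r | ∃ a b : ℝ, a < b ∧ x ∈ Icc a b ∧ r = intervalAverage (fun t => |f t|) a b}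

lemma HLM_nonneg (f : ℝ → ℝ) (x : ℝ) : 0 ≤ HLM f x := by
  refine Real.sSup_nonneg ?_
  rintro _ ⟨a, b, hab, -, rfl⟩
  exact mul_nonneg (inv_nonneg.2 (sub_nonneg.2 hab.le))
    (setIntegral_nonneg measurableSet_Ioc fun _ _ => abs_nonneg _)

lemma intervalAverage_le_HLM {f : ℝ → ℝ} {x a b : ℝ} (hbdd : BddAbove (intervalAverages f x))
    (hab : a < b) (hx : x ∈ Icc a b) : intervalAverage (fun t => |f t|) a b ≤ HLM f x :=
  le_csSup hbdd ⟨a, b, hab, hx, rfl⟩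

lemma HLM_iterate_abs_nonneg (f : ℝ → ℝ) (k : ℕ) (t : ℝ) :
    0 ≤ (fun h => HLM h)^[k] (fun s => |f s|) t := by
  cases k with
  | zero => exact abs_nonneg (f t)
  | succ k => rw [Function.iterate_succ_apply']; exact HLM_nonneg _ _

def decayWeight (t : ℝ) : ℝ := (2 * |t| + 2)⁻¹

lemma decayWeight_pos (t : ℝ) : 0 < decayWeight t := by
  unfold decayWeight; positivity

lemma continuous_decayWeight : Continuous decayWeight :=
  (by fun_prop : Continuous fun t : ℝ => 2 * |t| + 2).inv₀ fun t => by positivity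

lemma decayWeight_le_HLM_indicator (x : ℝ) :
    decayWeight x ≤ HLM (indicator (Ioc 0 1) fun _ => 1) x := by
  have habs : (fun t => |indicator (Ioc (0 : ℝ) 1) (fun _ => (1 : ℝ)) t|)
      = indicator (Ioc 0 1) fun _ => 1 :=
    funext fun t => abs_of_nonneg (indicator_nonneg (fun _ _ => zero_le_one) t)
  have havg : ∀ a b : ℝ, intervalAverage (fun t => |indicator (Ioc (0 : ℝ) 1) (fun _ => 1) t|) a b
      = (b - a)⁻¹ * volume.real (Ioc a b ∩ Ioc 0 1) := fun a b => by
    rw [intervalAverage, habs, setIntegral_indicator measurableSet_Ioc, setIntegral_const,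
      smul_eq_mul, mul_one]
  have hbdd : BddAbove (intervalAverages (indicator (Ioc 0 1) fun _ => 1) x) := by
    refine ⟨1, ?_⟩
    rintro _ ⟨a, b, hab, -, rfl⟩
    rw [havg, inv_mul_le_iff₀ (sub_pos.2 hab), mul_one]
    calc volume.real (Ioc a b ∩ Ioc 0 1) ≤ volume.real (Ioc a b) :=
          measureReal_mono inter_subset_left (by simp)
      _ = b - a := by simp [hab.le]
  have hx : x ∈ Icc (-|x| - 1) (|x| + 1) :=
    ⟨by linarith [neg_abs_le x], by linarith [le_abs_self x]⟩
  refine le_of_eq_of_le ?_ (intervalAverage_le_HLM hbdd (by linarith [abs_nonneg x]) hx)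
  have hsub : Ioc (0 : ℝ) 1 ⊆ Ioc (-|x| - 1) (|x| + 1) :=
    Ioc_subset_Ioc (by linarith [abs_nonneg x]) (by linarith [abs_nonneg x])
  rw [havg, inter_eq_right.2 hsub, Real.volume_real_Ioc_of_le zero_le_one, decayWeight]
  ring

lemma intervalAverage_abs_le_of_decay {f : ℝ → ℝ}
    (hdecay : Integrable fun s => |f s| * decayWeight s) {a b x δ : ℝ} (hx : x ∈ Icc a b)
    (hδ : 0 < δ) (hδab : δ ≤ b - a) :
    intervalAverage (fun s => |f s|) a b
      ≤ (δ⁻¹ * (2 * |x| + 2) + 2) * ∫ s, |f s| * decayWeight s := by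
  set D := ∫ s, |f s| * decayWeight s
  have hℓ : 0 < b - a := hδ.trans_le hδab
  have hpt : ∀ s ∈ Ioc a b, |f s| ≤ (2 * |x| + 2 * (b - a) + 2) * (|f s| * decayWeight s) := by
    intro s hs
    have hs' : |s| ≤ |x| + (b - a) := by
      have := abs_sub_abs_le_abs_sub s x
      have := abs_le.2 (⟨by linarith [hs.1, hx.2], by linarith [hs.2, hx.1]⟩ :
        -(b - a) ≤ s - x ∧ s - x ≤ b - a)
      linarith
    calc |f s| = (2 * |s| + 2) * (|f s| * decayWeight s) := by
          unfold decayWeight; field_simp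
      _ ≤ _ := mul_le_mul_of_nonneg_right (by linarith)
          (mul_nonneg (abs_nonneg _) (decayWeight_pos s).le)
  have hint : ∫ s in Ioc a b, |f s| ≤ (2 * |x| + 2 * (b - a) + 2) * D := calc
    ∫ s in Ioc a b, |f s|
      ≤ ∫ s in Ioc a b, (2 * |x| + 2 * (b - a) + 2) * (|f s| * decayWeight s) :=
        integral_mono_of_nonneg (Eventually.of_forall fun _ => abs_nonneg _)
          (hdecay.const_mul _).integrableOn
          ((ae_restrict_iff' measurableSet_Ioc).2 (Eventually.of_forall hpt))
    _ = (2 * |x| + 2 * (b - a) + 2) * ∫ s in Ioc a b, |f s| * decayWeight s :=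
        integral_const_mul _ _
    _ ≤ _ := mul_le_mul_of_nonneg_left (setIntegral_le_integral hdecay
          (Eventually.of_forall fun s => mul_nonneg (abs_nonneg _) (decayWeight_pos s).le))
          (by linarith [abs_nonneg x])
  have hD : 0 ≤ D := integral_nonneg fun s => mul_nonneg (abs_nonneg _) (decayWeight_pos s).le
  calc intervalAverage (fun s => |f s|) a b ≤ (b - a)⁻¹ * ((2 * |x| + 2 * (b - a) + 2) * D) :=
        mul_le_mul_of_nonneg_left hint (by positivity)
    _ = ((b - a)⁻¹ * (2 * |x| + 2) + 2) * D := by field_simp; ring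
    _ ≤ (δ⁻¹ * (2 * |x| + 2) + 2) * D := by gcongr

lemma intervalAverage_abs_le_setAverage_closedBall {f : ℝ → ℝ} (hf : LocallyIntegrable f)
    {a b x : ℝ} (hab : a < b) (hx : x ∈ Icc a b) :
    intervalAverage (fun s => |f s|) a b ≤ 2 * ⨍ s in Metric.closedBall x (b - a), |f s| := by
  have hsub : Ioc a b ⊆ Metric.closedBall x (b - a) := fun s hs => by
    rw [Metric.mem_closedBall, Real.dist_eq, abs_le]
    constructor <;> linarith [hs.1, hs.2, hx.1, hx.2]
  rw [setAverage_eq, measureReal_def, Real.volume_closedBall,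
    ENNReal.toReal_ofReal (by linarith), smul_eq_mul, ← mul_assoc, mul_inv, ← mul_assoc,
    mul_inv_cancel₀ two_ne_zero, one_mul]
  exact mul_le_mul_of_nonneg_left
    (setIntegral_mono_set ((hf.integrableOn_isCompact (isCompact_closedBall x _)).abs)
      (Eventually.of_forall fun _ => abs_nonneg _) (Eventually.of_forall hsub))
    (inv_nonneg.2 (sub_pos.2 hab).le)

-- Short intervals are controlled at Lebesgue points of `|f|`, long ones by the decay of `f`.
lemma ae_bddAbove_intervalAverages {f : ℝ → ℝ} (hf : LocallyIntegrable f)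
    (hdecay : Integrable fun t => |f t| * decayWeight t) :
    ∀ᵐ x, BddAbove (intervalAverages f x) := by
  have habs : LocallyIntegrable fun s => |f s| :=
    hf.mono hf.aestronglyMeasurable.norm (Eventually.of_forall fun _ => by simp)
  filter_upwards [IsUnifLocDoublingMeasure.ae_tendsto_average volume habs 1] with x hx
  have hlim : Tendsto (fun r => ⨍ s in Metric.closedBall x r, |f s|) (𝓝[>] 0) (𝓝 |f x|) :=
    hx (fun _ => x) id tendsto_id (eventually_nhdsWithin_of_forall fun r (hr : 0 < r) => by
      simp [hr.le])
  obtain ⟨δ, hδ, hball⟩ := mem_nhdsGT_iff_exists_Ioc_subset.1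
    (hlim.eventually_lt_const (lt_add_one |f x|))
  refine ⟨max (2 * (|f x| + 1)) ((δ⁻¹ * (2 * |x| + 2) + 2) * ∫ s, |f s| * decayWeight s), ?_⟩
  rintro _ ⟨a, b, hab, hxab, rfl⟩
  rcases le_or_gt (b - a) δ with hshort | hlong
  · have hlt : ⨍ s in Metric.closedBall x (b - a), |f s| < |f x| + 1 :=
      hball ⟨sub_pos.2 hab, hshort⟩
    exact le_max_of_le_left ((intervalAverage_abs_le_setAverage_closedBall hf hab hxab).trans
      (by linarith))
  · exact le_max_of_le_right (intervalAverage_abs_le_of_decay hdecay hxab hδ hlong.le)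

lemma ae_intervalAverage_le_HLM {f : ℝ → ℝ} (hf : LocallyIntegrable f)
    (hdecay : Integrable fun t => |f t| * decayWeight t) :
    ∀ᵐ x, ∀ a b : ℝ, a < b → x ∈ Icc a b → intervalAverage (fun t => |f t|) a b ≤ HLM f x := by
  filter_upwards [ae_bddAbove_intervalAverages hf hdecay] with x hx a b hab hxab
  exact intervalAverage_le_HLM hx hab hxab

end Maximal

section RubioDeFrancia

-- Unlike `IsA1`, this does not pass through `HLM`, whose `sSup` is `0` wherever the averages
-- are unbounded.
def IsA1Interval (w : ℝ → ℝ) (c : ℝ) : Prop :=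
  (∀ᵐ t, 0 < w t) ∧ LocallyIntegrable w ∧
    ∀ᵐ t, ∀ a b : ℝ, a < b → t ∈ Icc a b → intervalAverage w a b ≤ c * w t

lemma tsum_succ_div_pow_le {x : ℕ → ℝ} {c : ℝ} (hc : 0 < c) (hx : ∀ k, 0 ≤ x k)
    (hs : Summable fun k => x k / c ^ k) :
    Summable (fun k => x (k + 1) / c ^ k) ∧ ∑' k, x (k + 1) / c ^ k ≤ c * ∑' k, x k / c ^ k := by
  have hshift : ∀ k, x (k + 1) / c ^ k = c * (x (k + 1) / c ^ (k + 1)) := fun k => by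
    rw [pow_succ]; field_simp
  simp_rw [hshift]
  refine ⟨((summable_nat_add_iff 1).2 hs).mul_left c, ?_⟩
  rw [tsum_mul_left, hs.tsum_eq_zero_add]
  exact mul_le_mul_of_nonneg_left (le_add_of_nonneg_left (by simpa using hx 0)) hc.le

theorem isA1Interval_tsum_div_pow {q : ℕ → ℝ → ℝ} {c : ℝ} (hc : 0 < c)
    (hq : ∀ k t, 0 ≤ q k t) (hqint : ∀ k (a b : ℝ), IntegrableOn (q k) (Ioc a b))
    (hsum : ∀ a b : ℝ, Summable fun k => (∫ t in Ioc a b, q k t) / c ^ k)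
    (havg : ∀ᵐ t, ∀ k (a b : ℝ), a < b → t ∈ Icc a b → intervalAverage (q k) a b ≤ q (k + 1) t)
    (hpos : ∃ a b : ℝ, a < b ∧ 0 < ∫ t in Ioc a b, q 0 t) :
    IsA1Interval (fun t => ∑' k, q k t / c ^ k) c := by
  have hvint : ∀ k (a b : ℝ), IntegrableOn (fun t => q k t / c ^ k) (Ioc a b) :=
    fun k a b => (hqint k a b).div_const _
  have hvnorm : ∀ a b : ℝ, Summable fun k => ∫ t in Ioc a b, ‖q k t / c ^ k‖ := fun a b => by
    simpa only [Real.norm_eq_abs, abs_of_nonneg (div_nonneg (hq _ _) (pow_nonneg hc.le _)),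
      integral_div] using hsum a b
  have hsumt : ∀ᵐ t, Summable fun k => q k t / c ^ k :=
    ae_summable_of_summable_setIntegral_Ioc hvint hvnorm
  have hint : ∀ a b : ℝ, IntegrableOn (fun t => ∑' k, q k t / c ^ k) (Ioc a b) :=
    fun a b => integrable_tsum_of_summable_integral_norm (fun k => hvint k a b) (hvnorm a b)
  have havg_tsum : ∀ a b : ℝ, intervalAverage (fun t => ∑' k, q k t / c ^ k) a b
      = ∑' k, intervalAverage (q k) a b / c ^ k := fun a b => by
    rw [intervalAverage,
      ← integral_tsum_of_summable_integral_norm (fun k => hvint k a b) (hvnorm a b),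
      ← tsum_mul_left]
    simp_rw [integral_div, intervalAverage, mul_div_assoc]
  refine ⟨?_, locallyIntegrable_of_forall_integrableOn_Ioc hint, ?_⟩
  · obtain ⟨a₀, b₀, hab₀, hpos₀⟩ := hpos
    filter_upwards [hsumt, havg] with t hst havgt
    have hab : min a₀ t < max b₀ t := (min_le_left _ _).trans_lt (hab₀.trans_le (le_max_left _ _))
    have hq1 : 0 < q 1 t := by
      refine lt_of_lt_of_le (mul_pos (inv_pos.2 (sub_pos.2 hab)) (hpos₀.trans_le ?_))
        (havgt 0 _ _ hab ⟨min_le_right _ _, le_max_right _ _⟩)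
      exact setIntegral_mono_set (hqint 0 _ _) (Eventually.of_forall (hq 0))
        (Eventually.of_forall (Ioc_subset_Ioc (min_le_left _ _) (le_max_left _ _)))
    calc (0 : ℝ) < q 1 t / c ^ 1 := by positivity
      _ ≤ ∑' k, q k t / c ^ k :=
        hst.le_tsum 1 fun k _ => div_nonneg (hq k t) (pow_nonneg hc.le k)
  · filter_upwards [hsumt, havg] with t hst havgt a b hab ht
    obtain ⟨hsucc, hle⟩ := tsum_succ_div_pow_le hc (fun k => hq k t) hst
    rw [havg_tsum]
    refine (Summable.tsum_le_tsum (fun k => ?_) ?_ hsucc).trans hle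
    · exact div_le_div_of_nonneg_right (havgt k a b hab ht) (pow_nonneg hc.le k)
    · simpa only [intervalAverage, mul_div_assoc] using (hsum a b).mul_left (b - a)⁻¹

lemma MBoundedOn.iterate {Mem : (ℝ → ℝ) → Prop} {Nn : (ℝ → ℝ) → ℝ} {C : ℝ}
    (hM : MBoundedOn Mem Nn C) (hC : 0 ≤ C) {f : ℝ → ℝ} (hf : Mem f) (k : ℕ) :
    Mem ((fun h => HLM h)^[k] f) ∧ Nn ((fun h => HLM h)^[k] f) ≤ C ^ k * Nn f := by
  induction k with
  | zero => exact ⟨hf, by simp⟩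
  | succ k ih =>
    rw [Function.iterate_succ_apply']
    refine ⟨(hM _ ih.1).1, (hM _ ih.1).2.trans ?_⟩
    rw [pow_succ, mul_comm (C ^ k) C, mul_assoc]
    exact mul_le_mul_of_nonneg_left ih.2 hC

theorem isA1Interval_RdF {Mem : (ℝ → ℝ) → Prop} {Nn : (ℝ → ℝ) → ℝ} {C : ℝ} (hC : 0 < C)
    (hM : MBoundedOn Mem Nn C)
    (hdecay : ∀ f, Mem f → Integrable fun t => f t * decayWeight t)
    (hloc : ∀ a b : ℝ, ∃ K, 0 ≤ K ∧ ∀ f, Mem f →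
      IntegrableOn f (Ioc a b) ∧ ∫ t in Ioc a b, |f t| ≤ K * Nn f)
    {f : ℝ → ℝ} (hf : Mem fun t => |f t|) (hf0 : ¬ f =ᵐ[volume] fun _ => (0 : ℝ)) :
    IsA1Interval (RdF C f) (2 * C) := by
  set q : ℕ → ℝ → ℝ := fun k => (fun h => HLM h)^[k] fun s => |f s|
  have hq : ∀ k t, 0 ≤ q k t := HLM_iterate_abs_nonneg f
  have hmem : ∀ k, Mem (q k) ∧ Nn (q k) ≤ C ^ k * Nn (q 0) := hM.iterate hC.le hf
  have hqint : ∀ k (a b : ℝ), IntegrableOn (q k) (Ioc a b) := fun k a b =>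
    ((hloc a b).choose_spec.2 _ (hmem k).1).1
  have hsum : ∀ a b : ℝ, Summable fun k => (∫ t in Ioc a b, q k t) / (2 * C) ^ k := by
    intro a b
    obtain ⟨K, hK, hKf⟩ := hloc a b
    refine Summable.of_nonneg_of_le (fun k => div_nonneg
      (setIntegral_nonneg measurableSet_Ioc fun t _ => hq k t) (by positivity)) (fun k => ?_)
      (summable_geometric_two.mul_left (K * Nn (q 0)))
    rw [div_le_iff₀ (by positivity)]
    calc ∫ t in Ioc a b, q k t = ∫ t in Ioc a b, |q k t| := by
          simp_rw [abs_of_nonneg (hq k _)]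
      _ ≤ K * (C ^ k * Nn (q 0)) := (hKf _ (hmem k).1).2.trans
          (mul_le_mul_of_nonneg_left (hmem k).2 hK)
      _ = K * Nn (q 0) * (1 / 2) ^ k * (2 * C) ^ k := by
          rw [mul_pow, one_div, inv_pow]; field_simp
  have havg : ∀ᵐ t, ∀ k (a b : ℝ), a < b → t ∈ Icc a b →
      intervalAverage (q k) a b ≤ q (k + 1) t := by
    refine ae_all_iff.2 fun k => ?_
    have hdec : Integrable fun t => |q k t| * decayWeight t := by
      simpa only [abs_of_nonneg (hq k _)] using hdecay _ (hmem k).1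
    filter_upwards [ae_intervalAverage_le_HLM
      (locallyIntegrable_of_forall_integrableOn_Ioc (hqint k)) hdec] with t ht a b hab hab'
    have hle := ht a b hab hab'
    simp only [abs_of_nonneg (hq k _)] at hle
    exact hle.trans_eq (congrFun (Function.iterate_succ_apply' _ k _) t).symm
  exact isA1Interval_tsum_div_pow (by positivity) hq hqint hsum havg
    (exists_setIntegral_Ioc_abs_pos (locallyIntegrable_of_forall_integrableOn_Ioc (hqint 0)) hf0)

end RubioDeFrancia

section Muckenhoupt

lemma rpow_one_sub_mul_mul_rpow_neg_inv_mul_rpow {α β c₁ c₂ p : ℝ} (hα : 0 < α) (hβ : 0 < β)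
    (hc₁ : 0 < c₁) (hc₂ : 0 < c₂) (hp : p ≠ 1) :
    (α / c₁) ^ (1 - p) * β * ((β / c₂) ^ (-(p - 1)⁻¹) * α) ^ (p - 1) = c₁ ^ (p - 1) * c₂ := by
  have hp1 : p - 1 ≠ 0 := sub_ne_zero.2 hp
  have hβc : 0 < β / c₂ := div_pos hβ hc₂
  rw [Real.mul_rpow (Real.rpow_nonneg hβc.le _) hα.le, ← Real.rpow_mul hβc.le,
    neg_mul, inv_mul_cancel₀ hp1, Real.rpow_neg_one, show 1 - p = -(p - 1) by ring,
    Real.rpow_neg (div_pos hα hc₁).le, Real.div_rpow hα.le hc₁.le]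
  have : 0 < α ^ (p - 1) := Real.rpow_pos_of_pos hα _
  field_simp

namespace IsA1Interval

variable {u v : ℝ → ℝ} {c c₁ c₂ p a b : ℝ}

lemma ae_intervalAverage_div_le (hu : IsA1Interval u c) (hc : 0 < c) (hab : a < b) :
    ∀ᵐ t ∂volume.restrict (Ioc a b), intervalAverage u a b / c ≤ u t := by
  rw [ae_restrict_iff' measurableSet_Ioc]
  filter_upwards [hu.2.2] with t ht htab
  rw [div_le_iff₀' hc]
  exact ht a b hab (Ioc_subset_Icc_self htab)

lemma ae_rpow_mul_le (hu : IsA1Interval u c₁) (hv : IsA1Interval v c₂) (hc₁ : 0 < c₁)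
    (hc₂ : 0 < c₂) (hp : 1 < p) (hab : a < b) :
    ∀ᵐ t ∂volume.restrict (Ioc a b),
      u t ^ (1 - p) * v t ≤ (intervalAverage u a b / c₁) ^ (1 - p) * v t ∧
      (u t ^ (1 - p) * v t) ^ (-(p - 1)⁻¹)
        ≤ (intervalAverage v a b / c₂) ^ (-(p - 1)⁻¹) * u t := by
  have hα := div_pos (intervalAverage_pos hab (hu.2.1.integrableOn_Ioc a b) hu.1) hc₁
  have hβ := div_pos (intervalAverage_pos hab (hv.2.1.integrableOn_Ioc a b) hv.1) hc₂
  filter_upwards [ae_restrict_of_ae hu.1, ae_restrict_of_ae hv.1,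
    hu.ae_intervalAverage_div_le hc₁ hab, hv.ae_intervalAverage_div_le hc₂ hab]
    with t hut hvt hαu hβv
  refine ⟨mul_le_mul_of_nonneg_right
    (Real.rpow_le_rpow_of_nonpos hα hαu (by linarith)) hvt.le, ?_⟩
  rw [Real.mul_rpow (Real.rpow_nonneg hut.le _) hvt.le, ← Real.rpow_mul hut.le,
    show (1 - p) * -(p - 1)⁻¹ = 1 by
      rw [show 1 - p = -(p - 1) by ring, neg_mul_neg, mul_inv_cancel₀ (sub_pos.2 hp).ne'],
    Real.rpow_one, mul_comm]
  exact mul_le_mul_of_nonneg_right (Real.rpow_le_rpow_of_nonpos hβ hβv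
    (neg_nonpos.2 (inv_nonneg.2 (sub_pos.2 hp).le))) hut.le

lemma integrableOn_and_apRatio_le (hu : IsA1Interval u c₁) (hv : IsA1Interval v c₂)
    (hc₁ : 0 < c₁) (hc₂ : 0 < c₂) (hp : 1 < p) (hab : a < b) :
    IntegrableOn (fun t => u t ^ (1 - p) * v t) (Ioc a b) ∧
      apRatio p (fun t => u t ^ (1 - p) * v t) a b ≤ c₁ ^ (p - 1) * c₂ := by
  set w : ℝ → ℝ := fun t => u t ^ (1 - p) * v t
  have hwpos : ∀ᵐ t ∂volume.restrict (Ioc a b), 0 < w t := ae_restrict_of_ae (by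
    filter_upwards [hu.1, hv.1] with t hut hvt
    exact mul_pos (Real.rpow_pos_of_pos hut _) hvt)
  have hwm : AEStronglyMeasurable w :=
    ((hu.2.1.aestronglyMeasurable.aemeasurable.pow_const _).mul
      hv.2.1.aestronglyMeasurable.aemeasurable).aestronglyMeasurable
  have hbounds := ae_rpow_mul_le hu hv hc₁ hc₂ hp hab
  obtain ⟨hwint, hwle⟩ := integrableOn_and_intervalAverage_le_of_ae_le hab.le
    (hv.2.1.integrableOn_Ioc a b) hwm.restrict (hwpos.mono fun _ h => h.le)
    (hbounds.mono fun _ h => h.1)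
  obtain ⟨-, hσle⟩ := integrableOn_and_intervalAverage_le_of_ae_le hab.le
    (hu.2.1.integrableOn_Ioc a b) (hwm.aemeasurable.pow_const _).aestronglyMeasurable.restrict
    (hwpos.mono fun _ h => Real.rpow_nonneg h.le _) (hbounds.mono fun _ h => h.2)
  have hσ0 : 0 ≤ intervalAverage (fun t => w t ^ (-(p - 1)⁻¹)) a b :=
    mul_nonneg (inv_nonneg.2 (sub_pos.2 hab).le)
      (integral_nonneg_of_ae (hwpos.mono fun _ h => Real.rpow_nonneg h.le _))
  have hα := intervalAverage_pos hab (hu.2.1.integrableOn_Ioc a b) hu.1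
  have hβ := intervalAverage_pos hab (hv.2.1.integrableOn_Ioc a b) hv.1
  refine ⟨hwint, ?_⟩
  calc apRatio p w a b
      ≤ (intervalAverage u a b / c₁) ^ (1 - p) * intervalAverage v a b *
          ((intervalAverage v a b / c₂) ^ (-(p - 1)⁻¹) * intervalAverage u a b) ^ (p - 1) :=
        mul_le_mul hwle (Real.rpow_le_rpow hσ0 hσle (sub_pos.2 hp).le)
          (Real.rpow_nonneg hσ0 _) (by positivity)
    _ = c₁ ^ (p - 1) * c₂ := rpow_one_sub_mul_mul_rpow_neg_inv_mul_rpow hα hβ hc₁ hc₂ hp.ne'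

theorem isAp_rpow_mul (hu : IsA1Interval u c₁) (hv : IsA1Interval v c₂) (hc₁ : 0 < c₁)
    (hc₂ : 0 < c₂) (hp : 1 < p) :
    IsAp p (fun t => u t ^ (1 - p) * v t) (c₁ ^ (p - 1) * c₂) := by
  refine ⟨?_, locallyIntegrable_of_forall_integrableOn_Ioc fun a b => ?_,
    fun a b hab => (integrableOn_and_apRatio_le hu hv hc₁ hc₂ hp hab).2⟩
  · filter_upwards [hu.1, hv.1] with t hut hvt
    exact mul_pos (Real.rpow_pos_of_pos hut _) hvt
  · rcases lt_or_ge a b with hab | hba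
    · exact (integrableOn_and_apRatio_le hu hv hc₁ hc₂ hp hab).1
    · rw [Ioc_eq_empty hba.not_gt]
      exact integrableOn_empty

end IsA1Interval

end Muckenhoupt

section BanachFunctionSpace

namespace BFS

variable (Φ : BFS)

lemma mem_abs {f : ℝ → ℝ} (hf : Φ.Mem f) : Φ.Mem fun t => |f t| :=
  Φ.ideal _ f (by simpa only [Real.norm_eq_abs] using (Φ.mem_meas f hf).norm) hf
    (Eventually.of_forall fun _ => by simp)

lemma mem_sum_range_succ {v : ℕ → ℝ → ℝ} (hv : ∀ n, Φ.Mem (v n)) (m : ℕ) :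
    Φ.Mem (fun t => ∑ n ∈ Finset.range (m + 1), v n t) ∧
      Φ.N (fun t => ∑ n ∈ Finset.range (m + 1), v n t)
        ≤ ∑ n ∈ Finset.range (m + 1), Φ.N (v n) := by
  induction m with
  | zero => simpa using hv 0
  | succ m ih =>
    simp_rw [Finset.sum_range_succ _ (m + 1)]
    exact ⟨Φ.add_mem _ _ ih.1 (hv _),
      (Φ.norm_add_le' _ _ ih.1 (hv _)).trans (add_le_add_left ih.2 _)⟩

end BFS

lemma indicator_one_mul (s : Set ℝ) (φ : ℝ → ℝ) :
    (fun t => indicator s (fun _ => (1 : ℝ)) t * φ t) = indicator s φ := by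
  ext t; by_cases ht : t ∈ s <;> simp [ht]

lemma kMem.of_abs_le {Φ : BFS} {g φ : ℝ → ℝ} (hg : kMem Φ g) (hφ : AEStronglyMeasurable φ)
    (hle : ∀ᵐ t, |φ t| ≤ |g t|) : kMem Φ φ := by
  refine ⟨hφ, fun f hf => (hg.2 f hf).mono ((Φ.mem_meas f hf).mul hφ) ?_⟩
  filter_upwards [hle] with t ht
  simp only [Real.norm_eq_abs, abs_mul]
  exact mul_le_mul_of_nonneg_left ht (abs_nonneg _)

lemma kMem.abs {Φ : BFS} {φ : ℝ → ℝ} (hφ : kMem Φ φ) : kMem Φ fun t => |φ t| :=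
  hφ.of_abs_le (by simpa only [Real.norm_eq_abs] using hφ.1.norm)
    (Eventually.of_forall fun _ => by simp)

namespace BFS.IsBS

variable {Φ : BFS}

lemma exists_setIntegral_Ioc_le (hBS : Φ.IsBS) (a b : ℝ) : ∃ K, 0 ≤ K ∧ ∀ f, Φ.Mem f →
    IntegrableOn f (Ioc a b) ∧ ∫ t in Ioc a b, |f t| ≤ K * Φ.N f := by
  obtain ⟨K, hK⟩ := hBS.loc_int (Ioc a b) measurableSet_Ioc (by simp)
  refine ⟨max K 0, le_max_right _ _, fun f hf => ⟨(hK f hf).1, (hK f hf).2.trans ?_⟩⟩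
  exact mul_le_mul_of_nonneg_right (le_max_left _ _) (Φ.norm_nonneg' f)

lemma ae_summable (hBS : Φ.IsBS) {v : ℕ → ℝ → ℝ} (hv : ∀ n, Φ.Mem (v n))
    (hsum : Summable fun n => Φ.N (v n)) : ∀ᵐ t, Summable fun n => v n t := by
  refine ae_summable_of_summable_setIntegral_Ioc
    (fun n a b => ((hBS.exists_setIntegral_Ioc_le a b).choose_spec.2 _ (hv n)).1) fun a b => ?_
  obtain ⟨K, hK, hKf⟩ := hBS.exists_setIntegral_Ioc_le a b
  exact Summable.of_nonneg_of_le (fun n => setIntegral_nonneg measurableSet_Ioc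
    fun _ _ => abs_nonneg _) (fun n => (hKf _ (hv n)).2) (hsum.mul_left K)

-- Riesz–Fischer: the Fatou property applied to the partial sums.
lemma mem_tsum (hBS : Φ.IsBS) {v : ℕ → ℝ → ℝ} (hv : ∀ n, Φ.Mem (v n)) (hv0 : ∀ n t, 0 ≤ v n t)
    (hsum : Summable fun n => Φ.N (v n)) : Φ.Mem fun t => ∑' n, v n t := by
  refine (Φ.fatou (fun m t => ∑ n ∈ Finset.range (m + 1), v n t) _ (∑' n, Φ.N (v n))
    (fun m => (Φ.mem_sum_range_succ hv m).1)
    (fun m => (Φ.mem_sum_range_succ hv m).2.trans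
      (hsum.sum_le_tsum _ fun n _ => Φ.norm_nonneg' _))
    (fun m => Eventually.of_forall fun t => ⟨Finset.sum_nonneg fun n _ => hv0 n t,
      by rw [Finset.sum_range_succ _ (m + 1)]; exact le_add_of_nonneg_right (hv0 _ t)⟩)
    ?_).1
  filter_upwards [hBS.ae_summable hv hsum] with t ht
  exact ht.hasSum.tendsto_sum_nat.comp (tendsto_add_atTop_nat 1)

-- Otherwise `Σ |fₙ| / 2ⁿ` lies in `Φ` while its product with `φ` has infinite integral.
lemma bddAbove_kN (hBS : Φ.IsBS) {φ : ℝ → ℝ} (hφ : kMem Φ φ) :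
    BddAbove {r : ℝ | ∃ f, Φ.Mem f ∧ Φ.N f ≤ 1 ∧ r = ∫ t, |f t * φ t|} := by
  by_contra hnb
  have hex : ∀ n : ℕ, ∃ f, Φ.Mem f ∧ Φ.N f ≤ 1 ∧ (4 : ℝ) ^ n < ∫ t, |f t * φ t| := fun n => by
    obtain ⟨_, ⟨f, hf, hfN, rfl⟩, hlt⟩ := not_bddAbove_iff.1 hnb ((4 : ℝ) ^ n)
    exact ⟨f, hf, hfN, hlt⟩
  choose f hf hfN hfφ using hex
  set v : ℕ → ℝ → ℝ := fun n t => ((2 : ℝ) ^ n)⁻¹ * |f n t|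
  have hv : ∀ n, Φ.Mem (v n) := fun n => Φ.smul_mem _ _ (Φ.mem_abs (hf n))
  have hv0 : ∀ n t, 0 ≤ v n t := fun n t => by positivity
  have hvN : ∀ n, Φ.N (v n) ≤ (1 / 2) ^ n := fun n => by
    rw [show Φ.N (v n) = _ from Φ.norm_smul' _ fun t => |f n t|, abs_of_pos (by positivity),
      one_div, inv_pow]
    refine mul_le_of_le_one_right (by positivity) ((Φ.ideal_norm _ _ (Φ.mem_abs (hf n)) (hf n)
      (Eventually.of_forall fun _ => by simp)).trans (hfN n))
  have hvsum : Summable fun n => Φ.N (v n) :=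
    summable_geometric_two.of_nonneg_of_le (fun n => Φ.norm_nonneg' _) hvN
  set F : ℝ → ℝ := fun t => ∑' n, v n t
  have hFφ : Integrable fun t => |F t * φ t| := (hφ.2 F (hBS.mem_tsum hv hv0 hvsum)).abs
  have hbig : ∀ n : ℕ, (2 : ℝ) ^ n ≤ ∫ t, |F t * φ t| := fun n => by
    have hle : ∫ t, |v n t * φ t| ≤ ∫ t, |F t * φ t| := by
      refine integral_mono_ae (hφ.2 _ (hv n)).abs hFφ ?_
      filter_upwards [hBS.ae_summable hv hvsum] with t ht
      have hF : |F t| = F t := abs_of_nonneg (tsum_nonneg fun k => hv0 k t)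
      rw [abs_mul (v n t), abs_mul (F t), hF, abs_of_nonneg (hv0 n t)]
      exact mul_le_mul_of_nonneg_right (ht.le_tsum n fun k _ => hv0 k t) (abs_nonneg _)
    have hvn : ∫ t, |v n t * φ t| = ((2 : ℝ) ^ n)⁻¹ * ∫ t, |f n t * φ t| := by
      rw [← integral_const_mul]
      congr 1 with t
      simp only [v, abs_mul, abs_abs, abs_inv, abs_pow, abs_two]
      ring
    calc (2 : ℝ) ^ n = ((2 : ℝ) ^ n)⁻¹ * 4 ^ n := by
          rw [show (4 : ℝ) = 2 * 2 by norm_num, mul_pow]; field_simp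
      _ ≤ ((2 : ℝ) ^ n)⁻¹ * ∫ t, |f n t * φ t| :=
          mul_le_mul_of_nonneg_left (hfφ n).le (by positivity)
      _ ≤ ∫ t, |F t * φ t| := hvn ▸ hle
  obtain ⟨n, hn⟩ := pow_unbounded_of_one_lt (∫ t, |F t * φ t|) one_lt_two
  exact (hbig n).not_gt hn

lemma integral_abs_mul_le_norm_mul_kN (hBS : Φ.IsBS) {φ f : ℝ → ℝ} (hφ : kMem Φ φ)
    (hf : Φ.Mem f) : ∫ t, |f t * φ t| ≤ Φ.N f * kN Φ φ := by
  rcases (Φ.norm_nonneg' f).eq_or_lt with hN | hN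
  · have hf0 := (Φ.norm_eq_zero' f hf).1 hN.symm
    rw [← hN, zero_mul, integral_eq_zero_of_ae (by filter_upwards [hf0] with t ht; simp [ht])]
  · have hle : ∫ t, |(Φ.N f)⁻¹ * f t * φ t| ≤ kN Φ φ := by
      refine le_csSup (hBS.bddAbove_kN hφ) ⟨fun t => (Φ.N f)⁻¹ * f t,
        Φ.smul_mem _ _ hf, ?_, rfl⟩
      rw [show Φ.N (fun t => (Φ.N f)⁻¹ * f t) = _ from Φ.norm_smul' _ f,
        abs_of_pos (inv_pos.2 hN), inv_mul_cancel₀ hN.ne']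
    simp_rw [mul_assoc, abs_mul (Φ.N f)⁻¹, abs_of_pos (inv_pos.2 hN)] at hle
    rw [integral_const_mul, inv_mul_le_iff₀ hN] at hle
    exact hle

lemma kMem_indicator_Ioc (hBS : Φ.IsBS) (a b : ℝ) :
    kMem Φ (indicator (Ioc a b) fun _ => 1) := by
  refine ⟨(measurable_const.indicator measurableSet_Ioc).aestronglyMeasurable, fun f hf => ?_⟩
  simp_rw [mul_comm (f _), indicator_one_mul]
  exact (((hBS.exists_setIntegral_Ioc_le a b).choose_spec.2 f hf).1).integrable_indicator
    measurableSet_Ioc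

lemma exists_setIntegral_Ioc_le_kN (hBS : Φ.IsBS) (a b : ℝ) : ∃ K, 0 ≤ K ∧ ∀ φ, kMem Φ φ →
    IntegrableOn φ (Ioc a b) ∧ ∫ t in Ioc a b, |φ t| ≤ K * kN Φ φ := by
  have hind : Φ.Mem (indicator (Ioc a b) fun _ => 1) :=
    hBS.indicator_mem _ measurableSet_Ioc (by simp)
  refine ⟨Φ.N (indicator (Ioc a b) fun _ => 1), Φ.norm_nonneg' _, fun φ hφ => ⟨?_, ?_⟩⟩
  · have := hφ.2 _ hind
    rwa [indicator_one_mul, integrable_indicator_iff measurableSet_Ioc] at this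
  · refine le_of_eq_of_le ?_ (hBS.integral_abs_mul_le_norm_mul_kN hφ hind)
    rw [← integral_indicator measurableSet_Ioc]
    congr 1 with t
    by_cases ht : t ∈ Ioc a b <;> simp [ht]

lemma decayWeight_mem (hBS : Φ.IsBS) {C : ℝ} (hM : MBoundedOn Φ.Mem Φ.N C) :
    Φ.Mem decayWeight :=
  Φ.ideal _ _ continuous_decayWeight.aestronglyMeasurable
    (hM _ (hBS.indicator_mem _ measurableSet_Ioc (by simp))).1
    (Eventually.of_forall fun t => by
      rw [abs_of_pos (decayWeight_pos t), abs_of_nonneg (HLM_nonneg _ _)]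
      exact decayWeight_le_HLM_indicator t)

lemma decayWeight_kMem (hBS : Φ.IsBS) {C : ℝ} (hM' : MBoundedOn (kMem Φ) (kN Φ) C) :
    kMem Φ decayWeight :=
  (hM' _ (hBS.kMem_indicator_Ioc 0 1)).1.of_abs_le continuous_decayWeight.aestronglyMeasurable
    (Eventually.of_forall fun t => by
      rw [abs_of_pos (decayWeight_pos t), abs_of_nonneg (HLM_nonneg _ _)]
      exact decayWeight_le_HLM_indicator t)

end BFS.IsBS

end BanachFunctionSpace

/-- If the Hardy–Littlewood maximal operator is bounded on a Banach function
space `Φ` (with norm `C₁`) and on its Köthe dual `Φ'` (with norm `C₂`), then for `1 < p < ∞`,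
`0 ≠ g ∈ Φ` and `0 ≠ h ∈ Φ'`, the weight `w = (ℛg)^{1-p}·ℛ'h` built from the Rubio de Francia
iteration operators is an `A_p` weight with `[w]_{A_p} ≤ 2^p ‖M‖_Φ^{p-1} ‖M‖_{Φ'}`. -/
theorem statement1 (Φ : BFS) (hBS : Φ.IsBS) (C₁ C₂ : ℝ) (hC₁ : 0 < C₁) (hC₂ : 0 < C₂)
    (hM : MBoundedOn Φ.Mem Φ.N C₁) (hM' : MBoundedOn (kMem Φ) (kN Φ) C₂)
    (p : ℝ) (hp : 1 < p)
    (g : ℝ → ℝ) (hg : Φ.Mem g) (hg0 : ¬ (g =ᵐ[volume] (fun _ => (0:ℝ))))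
    (h : ℝ → ℝ) (hh : kMem Φ h) (hh0 : ¬ (h =ᵐ[volume] (fun _ => (0:ℝ)))) :
    IsAp p (fun t => (RdF C₁ g t) ^ (1 - p) * RdF C₂ h t)
      (2 ^ p * C₁ ^ (p - 1) * C₂) := by
  have hRg : IsA1Interval (RdF C₁ g) (2 * C₁) :=
    isA1Interval_RdF hC₁ hM (fun f hf => (hBS.decayWeight_kMem hM').2 f hf)
      hBS.exists_setIntegral_Ioc_le (Φ.mem_abs hg) hg0
  have hRh : IsA1Interval (RdF C₂ h) (2 * C₂) :=
    isA1Interval_RdF hC₂ hM'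
      (fun φ hφ => by simpa only [mul_comm] using hφ.2 _ (hBS.decayWeight_mem hM))
      hBS.exists_setIntegral_Ioc_le_kN hh.abs hh0
  have hconst : (2 * C₁) ^ (p - 1) * (2 * C₂) = 2 ^ p * C₁ ^ (p - 1) * C₂ := by
    rw [Real.mul_rpow zero_le_two hC₁.le, Real.rpow_sub_one two_ne_zero]
    field_simp
  exact hconst ▸ hRg.isAp_rpow_mul hRh (by positivity) (by positivity) hp
end
end

section
/- Let X, Y be Banach spaces with Y continuously embedded in X. Let A, B, P ∈ L(Y, X) and let ĉ: ℝ∖{0} → L(Y,X) satisfy the 𝔐₁-condition (ĉ and t·ĉ'(t) uniformly bounded). Suppose b(t) := −t²P + itB + A + ĉ(t) is invertible in L(Y,X) for all t ≠ 0, and that a(t) := b(t)^{-1} is bounded in L(X,Y) while a₀(t) := tB a(t) and a₁(t) := t²P a(t) are bounded in L(X). Then a satisfies the 𝔐₁-condition in L(X,Y): sup_{t≠0} ‖t a'(t)‖_{L(X,Y)} < ∞, via the identity −a'(t) = a(t) b'(t) a(t) with b'(t) = −2tP + iB + ĉ'(t). -/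
/-!
Differentiating `a(t) b(t) = 1` gives `a' = -a b' a`. Since `b` is a quadratic pencil,
`t b'(t) a(t) = -2 t² P a(t) + i t B a(t) + t ĉ'(t) a(t)` is bounded by the bounds on `a₀`, `a₁`
and `ĉ`, hence so is `t a'(t) = -a(t) (t b'(t) a(t))`. Differentiability of `a` itself comes from
`a(s) - a(t) = -a(s) (b(s) - b(t)) a(t)` and the uniform bound on `a`: this identity first makes
`a` continuous, and then its difference quotients converge to `-a b' a`.
-/

open Filter Topology

section InverseFamily

variable {𝕜 E F : Type*} [NontriviallyNormedField 𝕜]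
  [NormedAddCommGroup E] [NormedSpace 𝕜 E] [NormedAddCommGroup F] [NormedSpace 𝕜 F]

theorem ContinuousLinearMap.sub_eq_neg_comp_sub_comp {b b₀ : E →L[𝕜] F} {a a₀ : F →L[𝕜] E}
    (ha : a.comp b = .id 𝕜 E) (ha₀ : b₀.comp a₀ = .id 𝕜 F) :
    a - a₀ = -(a.comp ((b - b₀).comp a₀)) := by
  rw [sub_comp, comp_sub, ← comp_assoc, ha, ha₀]
  simp

variable {b : ℝ → E →L[𝕜] F} {a : ℝ → F →L[𝕜] E} {t C : ℝ}

theorem continuousAt_of_leftInverse_of_bounded (hb : ContinuousAt b t)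
    (hleft : ∀ᶠ s in 𝓝 t, (a s).comp (b s) = .id 𝕜 E) (hright : (b t).comp (a t) = .id 𝕜 F)
    (hbdd : ∀ᶠ s in 𝓝 t, ‖a s‖ ≤ C) : ContinuousAt a t := by
  have hb0 : Tendsto (fun s => ‖b s - b t‖) (𝓝 t) (𝓝 0) :=
    tendsto_iff_norm_sub_tendsto_zero.mp hb
  rw [ContinuousAt, tendsto_iff_norm_sub_tendsto_zero]
  refine squeeze_zero_norm' ?_ (by simpa using (hb0.const_mul C).mul_const ‖a t‖)
  filter_upwards [hleft, hbdd] with s hs hCs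
  rw [norm_norm, ContinuousLinearMap.sub_eq_neg_comp_sub_comp hs hright, norm_neg]
  calc ‖(a s).comp ((b s - b t).comp (a t))‖ ≤ ‖a s‖ * (‖b s - b t‖ * ‖a t‖) :=
        (ContinuousLinearMap.opNorm_comp_le _ _).trans
          (mul_le_mul_of_nonneg_left (ContinuousLinearMap.opNorm_comp_le _ _) (norm_nonneg _))
    _ ≤ C * ‖b s - b t‖ * ‖a t‖ := by
        rw [← mul_assoc]
        gcongr

variable [NormedAlgebra ℝ 𝕜] [NormedSpace ℝ E] [IsScalarTower ℝ 𝕜 E]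
  [NormedSpace ℝ F] [IsScalarTower ℝ 𝕜 F]

theorem hasDerivAt_of_leftInverse_of_bounded {b' : E →L[𝕜] F} (hb : HasDerivAt b b' t)
    (hleft : ∀ᶠ s in 𝓝 t, (a s).comp (b s) = .id 𝕜 E) (hright : (b t).comp (a t) = .id 𝕜 F)
    (hbdd : ∀ᶠ s in 𝓝 t, ‖a s‖ ≤ C) :
    HasDerivAt a (-((a t).comp (b'.comp (a t)))) t := by
  have ha : ContinuousAt a t :=
    continuousAt_of_leftInverse_of_bounded hb.continuousAt hleft hright hbdd
  rw [hasDerivAt_iff_tendsto_slope] at hb ⊢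
  have hslope : Tendsto (fun s => (slope b t s).comp (a t)) (𝓝[≠] t) (𝓝 (b'.comp (a t))) :=
    (((ContinuousLinearMap.compL 𝕜 F E F).flip (a t)).continuous.tendsto b').comp hb
  have hlim : Tendsto (fun s => -((a s).comp ((slope b t s).comp (a t)))) (𝓝[≠] t)
      (𝓝 (-((a t).comp (b'.comp (a t))))) :=
    (((ContinuousLinearMap.compL 𝕜 F F E).continuous₂.tendsto (a t, b'.comp (a t))).comp
      ((ha.tendsto.mono_left nhdsWithin_le_nhds).prodMk_nhds hslope)).neg
  refine hlim.congr' ?_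
  filter_upwards [nhdsWithin_le_nhds hleft] with s hs
  rw [slope_def_module, slope_def_module, ContinuousLinearMap.sub_eq_neg_comp_sub_comp hs hright]
  ext x
  simp [← smul_neg]

end InverseFamily

section QuadraticPencil

variable {E F : Type*} [NormedAddCommGroup E] [NormedSpace ℂ E]
  [NormedAddCommGroup F] [NormedSpace ℂ F]

theorem hasDerivAt_quadraticPencil (P B A : E →L[ℂ] F) {c : ℝ → E →L[ℂ] F} {c' : E →L[ℂ] F}
    {t : ℝ} (hc : HasDerivAt c c' t) :
    HasDerivAt (fun s : ℝ => (-(s:ℂ) ^ 2) • P + (Complex.I * (s:ℂ)) • B + A + c s)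
      ((-2 * t : ℂ) • P + Complex.I • B + c') t := by
  have hsq : HasDerivAt (fun s : ℝ => -(s:ℂ) ^ 2) (-2 * t : ℂ) t := by
    simpa using ((hasDerivAt_pow 2 (t:ℂ)).neg).comp_ofReal
  have hlin : HasDerivAt (fun s : ℝ => Complex.I * (s:ℂ)) Complex.I t := by
    simpa using ((hasDerivAt_id (t:ℂ)).const_mul Complex.I).comp_ofReal
  exact (((hsq.smul_const P).add (hlin.smul_const B)).add_const A).add hc

theorem abs_mul_norm_quadraticPencil_deriv_comp_le (P B c' : E →L[ℂ] F) (a : F →L[ℂ] E)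
    (t : ℝ) :
    |t| * ‖((-2 * t : ℂ) • P + Complex.I • B + c').comp a‖ ≤
      2 * (t ^ 2 * ‖P.comp a‖) + |t| * ‖B.comp a‖ + |t| * ‖c'‖ * ‖a‖ := by
  have hexpand : (t:ℂ) • ((-2 * t : ℂ) • P + Complex.I • B + c').comp a =
      (-2 * t ^ 2 : ℂ) • P.comp a + ((t:ℂ) * Complex.I) • B.comp a + (t:ℂ) • c'.comp a := by
    simp only [ContinuousLinearMap.add_comp, ContinuousLinearMap.smul_comp, smul_add, smul_smul]
    module
  calc |t| * ‖((-2 * t : ℂ) • P + Complex.I • B + c').comp a‖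
      = ‖(t:ℂ) • ((-2 * t : ℂ) • P + Complex.I • B + c').comp a‖ := by
        rw [norm_smul, Complex.norm_real, Real.norm_eq_abs]
    _ ≤ ‖(-2 * t ^ 2 : ℂ) • P.comp a‖ + ‖((t:ℂ) * Complex.I) • B.comp a‖ +
        ‖(t:ℂ) • c'.comp a‖ := by
        rw [hexpand]
        exact norm_add₃_le
    _ ≤ 2 * (t ^ 2 * ‖P.comp a‖) + |t| * ‖B.comp a‖ + |t| * ‖c'‖ * ‖a‖ := by
        have hPa : ‖(-2 * t ^ 2 : ℂ)‖ = 2 * t ^ 2 := by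
          rw [show (-2 * t ^ 2 : ℂ) = ((-2 * t ^ 2 : ℝ) : ℂ) by push_cast; ring,
            Complex.norm_real, Real.norm_eq_abs, abs_of_nonpos (by nlinarith [sq_nonneg t])]
          ring
        rw [norm_smul, norm_smul, norm_smul, hPa, norm_mul, Complex.norm_I, Complex.norm_real,
          Real.norm_eq_abs, mul_one, mul_assoc 2, mul_assoc |t|]
        gcongr
        exact ContinuousLinearMap.opNorm_comp_le c' a

end QuadraticPencil

theorem statement11_general (X Y : Type*)
    [NormedAddCommGroup X] [NormedSpace ℂ X]
    [NormedAddCommGroup Y] [NormedSpace ℂ Y]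
    (A B P : Y →L[ℂ] X) (c c' : ℝ → Y →L[ℂ] X) (K : ℝ)
    (hc : ∀ t : ℝ, t ≠ 0 → HasDerivAt c (c' t) t)
    (hcK : ∀ t : ℝ, t ≠ 0 → ‖c t‖ ≤ K ∧ |t| * ‖c' t‖ ≤ K)
    (a : ℝ → X →L[ℂ] Y)
    (hinv : ∀ t : ℝ, t ≠ 0 →
      ((-(t:ℂ) ^ 2) • P + (Complex.I * (t:ℂ)) • B + A + c t).comp (a t) =
          ContinuousLinearMap.id ℂ X ∧
        (a t).comp ((-(t:ℂ) ^ 2) • P + (Complex.I * (t:ℂ)) • B + A + c t) =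
          ContinuousLinearMap.id ℂ Y)
    (Ka : ℝ)
    (ha : ∀ t : ℝ, t ≠ 0 → ‖a t‖ ≤ Ka)
    (ha0 : ∀ t : ℝ, t ≠ 0 → |t| * ‖B.comp (a t)‖ ≤ Ka)
    (ha1 : ∀ t : ℝ, t ≠ 0 → t ^ 2 * ‖P.comp (a t)‖ ≤ Ka) :
    ∃ a' : ℝ → X →L[ℂ] Y,
      (∀ t : ℝ, t ≠ 0 → HasDerivAt a (a' t) t) ∧
      (∀ t : ℝ, t ≠ 0 →
        a' t = -((a t).comp ((((-2 * t : ℂ)) • P + Complex.I • B + c' t).comp (a t)))) ∧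
      ∃ K' : ℝ, ∀ t : ℝ, t ≠ 0 → |t| * ‖a' t‖ ≤ K' := by
  refine ⟨fun t => -((a t).comp (((-2 * t : ℂ) • P + Complex.I • B + c' t).comp (a t))),
    fun t ht => ?_, fun _ _ => rfl, Ka * (3 * Ka + K * Ka), fun t ht => ?_⟩
  · have hne : ∀ᶠ s in 𝓝 t, s ≠ 0 := eventually_ne_nhds ht
    exact hasDerivAt_of_leftInverse_of_bounded (hasDerivAt_quadraticPencil P B A (hc t ht))
      (hne.mono fun s hs => (hinv s hs).2) (hinv t ht).1 (hne.mono fun s hs => ha s hs)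
  · have hKa : 0 ≤ Ka := (norm_nonneg _).trans (ha 1 one_ne_zero)
    have hc'a : |t| * ‖c' t‖ * ‖a t‖ ≤ K * Ka :=
      mul_le_mul (hcK t ht).2 (ha t ht) (norm_nonneg _)
        ((mul_nonneg (abs_nonneg t) (norm_nonneg _)).trans (hcK t ht).2)
    have hb'a := abs_mul_norm_quadraticPencil_deriv_comp_le P B (c' t) (a t) t
    calc |t| * ‖-((a t).comp (((-2 * t : ℂ) • P + Complex.I • B + c' t).comp (a t)))‖
        ≤ ‖a t‖ * (|t| * ‖((-2 * t : ℂ) • P + Complex.I • B + c' t).comp (a t)‖) := by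
          rw [norm_neg, mul_left_comm]
          gcongr
          exact ContinuousLinearMap.opNorm_comp_le _ _
      _ ≤ Ka * (3 * Ka + K * Ka) := by
          gcongr
          · exact ha t ht
          · linarith [ha0 t ht, ha1 t ht]

/-- Let `Y ↪ X` be Banach spaces, `A, B, P ∈ L(Y,X)`, and let
`ĉ : ℝ∖{0} → L(Y,X)` satisfy the `𝔐₁`-condition. If `b(t) = −t²P + itB + A + ĉ(t)` is
invertible for all `t ≠ 0` with `a = b⁻¹` bounded in `L(X,Y)` and `a₀(t) = tBa(t)`,
`a₁(t) = t²Pa(t)` bounded in `L(X)`, then `a` satisfies the `𝔐₁`-condition: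
`sup_{t≠0}‖t a'(t)‖ < ∞`, via the identity `−a'(t) = a(t) b'(t) a(t)` with
`b'(t) = −2tP + iB + ĉ'(t)`. -/
theorem statement11 (X Y : Type*)
    [NormedAddCommGroup X] [NormedSpace ℂ X] [CompleteSpace X]
    [NormedAddCommGroup Y] [NormedSpace ℂ Y] [CompleteSpace Y]
    (J : Y →L[ℂ] X) (hJ : Function.Injective J)
    (A B P : Y →L[ℂ] X) (c c' : ℝ → Y →L[ℂ] X) (K : ℝ)
    (hc : ∀ t : ℝ, t ≠ 0 → HasDerivAt c (c' t) t)
    (hcK : ∀ t : ℝ, t ≠ 0 → ‖c t‖ ≤ K ∧ |t| * ‖c' t‖ ≤ K)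
    (a : ℝ → X →L[ℂ] Y)
    (hinv : ∀ t : ℝ, t ≠ 0 →
      ((-(t:ℂ) ^ 2) • P + (Complex.I * (t:ℂ)) • B + A + c t).comp (a t) =
          ContinuousLinearMap.id ℂ X ∧
        (a t).comp ((-(t:ℂ) ^ 2) • P + (Complex.I * (t:ℂ)) • B + A + c t) =
          ContinuousLinearMap.id ℂ Y)
    (Ka : ℝ)
    (ha : ∀ t : ℝ, t ≠ 0 → ‖a t‖ ≤ Ka)
    (ha0 : ∀ t : ℝ, t ≠ 0 → |t| * ‖B.comp (a t)‖ ≤ Ka)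
    (ha1 : ∀ t : ℝ, t ≠ 0 → t ^ 2 * ‖P.comp (a t)‖ ≤ Ka) :
    ∃ a' : ℝ → X →L[ℂ] Y,
      (∀ t : ℝ, t ≠ 0 → HasDerivAt a (a' t) t) ∧
      (∀ t : ℝ, t ≠ 0 →
        a' t = -((a t).comp ((((-2 * t : ℂ)) • P + Complex.I • B + c' t).comp (a t)))) ∧
      ∃ K' : ℝ, ∀ t : ℝ, t ≠ 0 → |t| * ‖a' t‖ ≤ K' :=
  statement11_general X Y A B P c c' K hc hcK a hinv Ka ha ha0 ha1
end

section
/- Let X, Y be Banach spaces with Y ↪ X, let A, B, P ∈ L(Y,X), and let γ ∈ ℕ. Suppose ĉ ∈ C^γ(ℝ∖{0}; L(Y,X)) satisfies the 𝔐_γ-condition, b(t) := −t²P + itB + A + ĉ(t) is invertible for all t ≠ 0, a := b^{-1} ∈ L^∞(ℝ∖{0}; L(X,Y)), and a₀(t) := tBa(t), a₁(t) := t²Pa(t) are in L^∞(ℝ∖{0}; L(X)). Then a satisfies the 𝔐_γ-condition in L(X,Y), and a₀, a₁ satisfy the 𝔐_γ-condition in L(X). -/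
open MeasureTheory Filter Topology

noncomputable section

/-- The `𝔐_γ`-condition (Mihlin condition of order `γ`) for a function on `ℝ∖{0}`:
`m ∈ C^γ(ℝ∖{0})` and `max_{0≤l≤γ} sup_{t≠0} ‖t^l m^{(l)}(t)‖ < ∞`. -/
def MihlinCond (γ : ℕ) {E : Type*} [NormedAddCommGroup E] [NormedSpace ℝ E]
    (m : ℝ → E) : Prop :=
  ContDiffOn ℝ (γ : ℕ∞) m {(0:ℝ)}ᶜ ∧
    ∃ K : ℝ, ∀ l ≤ γ, ∀ t : ℝ, t ≠ 0 →
      |t| ^ l * ‖iteratedDerivWithin l m {(0:ℝ)}ᶜ t‖ ≤ K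

/-!
Differentiating `a b = 1` gives `a' = -a b' a` with `b' = -2tP + iB + ĉ'`, i.e. `a' = -a g` for
`g = -2t Pa + i Ba + ĉ' a`. Say `f` has weight `w` up to order `n` if `|t|^(w+i) ‖f^{(i)}(t)‖` is
bounded for `i ≤ n`; weights add under bilinear products (Leibniz rule) and grow by one under
differentiation. If `a, Ba, Pa` have weights `0, 1, 2` up to order `m`, then `g` has weight `1`
up to order `m`, so `a' = -a g`, `(Ba)' = -(Ba) g`, `(Pa)' = -(Pa) g` have weights `1, 2, 3` up to
order `m`, and `a, Ba, Pa` have weights `0, 1, 2` up to order `m + 1`. Multiplying by `t` and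
`t²` (weights `-1` and `-2`) gives the `𝔐_γ`-condition for `a₀` and `a₁`.
-/

open Set ContinuousLinearMap

section WeightedMihlin

variable {E F G : Type*} [NormedAddCommGroup E] [NormedSpace ℝ E]
  [NormedAddCommGroup F] [NormedSpace ℝ F] [NormedAddCommGroup G] [NormedSpace ℝ G]

def WeightedMihlin (n : ℕ) (w : ℤ) (f : ℝ → E) : Prop :=
  ContDiffOn ℝ (n : ℕ∞) f {0}ᶜ ∧ ∃ K : ℝ, 0 ≤ K ∧ ∀ i ≤ n, ∀ t : ℝ, t ≠ 0 →
    |t| ^ (w + i) * ‖iteratedDerivWithin i f {0}ᶜ t‖ ≤ K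

theorem mihlinCond_iff_weightedMihlin {n : ℕ} {f : ℝ → E} :
    MihlinCond n f ↔ WeightedMihlin n 0 f := by
  simp only [MihlinCond, WeightedMihlin, zero_add, zpow_natCast]
  refine and_congr_right fun _ => ⟨fun ⟨K, hK⟩ => ⟨max K 0, le_max_right _ _,
    fun i hi t ht => (hK i hi t ht).trans (le_max_left _ _)⟩, fun ⟨K, _, hK⟩ => ⟨K, hK⟩⟩

theorem norm_iteratedDerivWithin_bilinear_le (Bi : E →L[ℝ] F →L[ℝ] G) {f : ℝ → E} {g : ℝ → F}
    {N : WithTop ℕ∞} {s : Set ℝ} {x : ℝ} (hf : ContDiffOn ℝ N f s) (hg : ContDiffOn ℝ N g s)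
    (hs : UniqueDiffOn ℝ s) (hx : x ∈ s) {n : ℕ} (hn : n ≤ N) :
    ‖iteratedDerivWithin n (fun y => Bi (f y) (g y)) s x‖ ≤
      ‖Bi‖ * ∑ i ∈ Finset.range (n + 1), (n.choose i : ℝ) * ‖iteratedDerivWithin i f s x‖ *
        ‖iteratedDerivWithin (n - i) g s x‖ := by
  simpa only [norm_iteratedFDerivWithin_eq_norm_iteratedDerivWithin] using
    Bi.norm_iteratedFDerivWithin_le_of_bilinear hf hg hs hx hn

namespace WeightedMihlin

variable {n : ℕ} {w : ℤ} {f g : ℝ → E}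

theorem congr (hf : WeightedMihlin n w f) (hfg : EqOn f g {0}ᶜ) : WeightedMihlin n w g := by
  obtain ⟨hcd, K, hK0, hK⟩ := hf
  refine ⟨hcd.congr fun t ht => (hfg ht).symm, K, hK0, fun i hi t ht => ?_⟩
  rw [← iteratedDerivWithin_congr hfg ht]
  exact hK i hi t ht

theorem mono {m : ℕ} (hf : WeightedMihlin n w f) (hmn : m ≤ n) : WeightedMihlin m w f := by
  obtain ⟨hcd, K, hK0, hK⟩ := hf
  exact ⟨hcd.of_le (by exact_mod_cast hmn), K, hK0, fun i hi => hK i (hi.trans hmn)⟩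

theorem of_bound (hf : ContinuousOn f {0}ᶜ) {K : ℝ} (hK : ∀ t : ℝ, t ≠ 0 → |t| ^ w * ‖f t‖ ≤ K) :
    WeightedMihlin 0 w f := by
  refine ⟨contDiffOn_zero.2 hf, max K 0, le_max_right _ _, fun i hi t ht => ?_⟩
  obtain rfl : i = 0 := Nat.le_zero.1 hi
  simpa using (hK t ht).trans (le_max_left _ _)

theorem add (hf : WeightedMihlin n w f) (hg : WeightedMihlin n w g) :
    WeightedMihlin n w (fun t => f t + g t) := by
  obtain ⟨hfc, K₁, hK₁0, hK₁⟩ := hf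
  obtain ⟨hgc, K₂, hK₂0, hK₂⟩ := hg
  refine ⟨hfc.add hgc, K₁ + K₂, by positivity, fun i hi t ht => ?_⟩
  have hi' : (i : WithTop ℕ∞) ≤ (n : ℕ∞) := by exact_mod_cast hi
  rw [iteratedDerivWithin_fun_add ht isOpen_compl_singleton.uniqueDiffOn
    ((hfc t ht).of_le hi') ((hgc t ht).of_le hi')]
  calc |t| ^ (w + i) * ‖iteratedDerivWithin i f {0}ᶜ t + iteratedDerivWithin i g {0}ᶜ t‖
      ≤ |t| ^ (w + i) * ‖iteratedDerivWithin i f {0}ᶜ t‖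
          + |t| ^ (w + i) * ‖iteratedDerivWithin i g {0}ᶜ t‖ := by
        rw [← mul_add]; gcongr; exact norm_add_le _ _
    _ ≤ K₁ + K₂ := add_le_add (hK₁ i hi t ht) (hK₂ i hi t ht)

theorem neg (hf : WeightedMihlin n w f) : WeightedMihlin n w (fun t => -f t) := by
  obtain ⟨hfc, K, hK0, hK⟩ := hf
  refine ⟨hfc.neg, K, hK0, fun i hi t ht => ?_⟩
  rw [iteratedDerivWithin_fun_neg, norm_neg]
  exact hK i hi t ht

theorem clm_apply (L : E →L[ℝ] F) (hf : WeightedMihlin n w f) :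
    WeightedMihlin n w (fun t => L (f t)) := by
  obtain ⟨hfc, K, hK0, hK⟩ := hf
  refine ⟨L.contDiff.comp_contDiffOn hfc, ‖L‖ * K, by positivity, fun i hi t ht => ?_⟩
  have hL : ‖iteratedDerivWithin i (fun t => L (f t)) {0}ᶜ t‖
      ≤ ‖L‖ * ‖iteratedDerivWithin i f {0}ᶜ t‖ := by
    rw [← norm_iteratedFDerivWithin_eq_norm_iteratedDerivWithin,
      ← norm_iteratedFDerivWithin_eq_norm_iteratedDerivWithin,
      show (fun t => L (f t)) = L ∘ f from rfl, L.iteratedFDerivWithin_comp_left (hfc t ht)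
        isOpen_compl_singleton.uniqueDiffOn ht (by exact_mod_cast hi)]
    exact L.norm_compContinuousMultilinearMap_le _
  calc |t| ^ (w + i) * ‖iteratedDerivWithin i (fun t => L (f t)) {0}ᶜ t‖
      ≤ ‖L‖ * (|t| ^ (w + i) * ‖iteratedDerivWithin i f {0}ᶜ t‖) := by
        rw [mul_left_comm]; gcongr
    _ ≤ ‖L‖ * K := by gcongr; exact hK i hi t ht

theorem bilinear (Bi : E →L[ℝ] F →L[ℝ] G) {w₁ w₂ : ℤ} {f : ℝ → E} {g : ℝ → F}
    (hf : WeightedMihlin n w₁ f) (hg : WeightedMihlin n w₂ g) (hw : w₁ + w₂ = w) :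
    WeightedMihlin n w (fun t => Bi (f t) (g t)) := by
  obtain ⟨hfc, K₁, hK₁0, hK₁⟩ := hf
  obtain ⟨hgc, K₂, hK₂0, hK₂⟩ := hg
  refine ⟨Bi.isBoundedBilinearMap.contDiff.comp_contDiffOn (hfc.prodMk hgc),
    ‖Bi‖ * (2 ^ n * (K₁ * K₂)), by positivity, fun i hi t ht => ?_⟩
  have ht' : 0 < |t| := abs_pos.2 ht
  have hterm : ∀ j ∈ Finset.range (i + 1), |t| ^ (w + i) * ((i.choose j : ℝ) *
      ‖iteratedDerivWithin j f {0}ᶜ t‖ * ‖iteratedDerivWithin (i - j) g {0}ᶜ t‖)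
      ≤ (i.choose j : ℝ) * (K₁ * K₂) := by
    intro j hj
    have hji : j ≤ i := Nat.lt_succ_iff.1 (Finset.mem_range.1 hj)
    have hsplit : |t| ^ (w + i) = |t| ^ (w₁ + j) * |t| ^ (w₂ + (i - j : ℕ)) := by
      rw [← zpow_add₀ ht'.ne', Nat.cast_sub hji, ← hw]; ring_nf
    calc |t| ^ (w + i) * ((i.choose j : ℝ) *
          ‖iteratedDerivWithin j f {0}ᶜ t‖ * ‖iteratedDerivWithin (i - j) g {0}ᶜ t‖)
        = (i.choose j : ℝ) * ((|t| ^ (w₁ + j) * ‖iteratedDerivWithin j f {0}ᶜ t‖) *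
            (|t| ^ (w₂ + (i - j : ℕ)) * ‖iteratedDerivWithin (i - j) g {0}ᶜ t‖)) := by
          rw [hsplit]; ring
      _ ≤ (i.choose j : ℝ) * (K₁ * K₂) := by
          gcongr
          exacts [hK₁ j (hji.trans hi) t ht, hK₂ (i - j) ((Nat.sub_le i j).trans hi) t ht]
  calc |t| ^ (w + i) * ‖iteratedDerivWithin i (fun y => Bi (f y) (g y)) {0}ᶜ t‖
      ≤ ‖Bi‖ * ∑ j ∈ Finset.range (i + 1), |t| ^ (w + i) * ((i.choose j : ℝ) *
          ‖iteratedDerivWithin j f {0}ᶜ t‖ * ‖iteratedDerivWithin (i - j) g {0}ᶜ t‖) := by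
        rw [← Finset.mul_sum, mul_left_comm]
        gcongr
        exact norm_iteratedDerivWithin_bilinear_le Bi hfc hgc
          isOpen_compl_singleton.uniqueDiffOn ht (by exact_mod_cast hi)
    _ ≤ ‖Bi‖ * ∑ j ∈ Finset.range (i + 1), (i.choose j : ℝ) * (K₁ * K₂) :=
        mul_le_mul_of_nonneg_left (Finset.sum_le_sum hterm) (norm_nonneg Bi)
    _ = ‖Bi‖ * (2 ^ i * (K₁ * K₂)) := by
        rw [← Finset.sum_mul, ← Nat.cast_sum, Nat.sum_range_choose, Nat.cast_pow, Nat.cast_two]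
    _ ≤ ‖Bi‖ * (2 ^ n * (K₁ * K₂)) := by gcongr; exact one_le_two

theorem succ (hf : WeightedMihlin n w f) (hf' : WeightedMihlin n (w + 1) (derivWithin f {0}ᶜ))
    (hcd : ContDiffOn ℝ ((n + 1 : ℕ) : ℕ∞) f {0}ᶜ) : WeightedMihlin (n + 1) w f := by
  obtain ⟨_, K₁, hK₁0, hK₁⟩ := hf
  obtain ⟨_, K₂, -, hK₂⟩ := hf'
  refine ⟨hcd, max K₁ K₂, le_max_of_le_left hK₁0, fun i hi t ht => ?_⟩
  rcases Nat.of_le_succ hi with hi | rfl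
  · exact (hK₁ i hi t ht).trans (le_max_left _ _)
  · rw [iteratedDerivWithin_succ', show w + (n + 1 : ℕ) = w + 1 + (n : ℤ) by push_cast; ring]
    exact (hK₂ n le_rfl t ht).trans (le_max_right _ _)

theorem derivWithin (hf : WeightedMihlin (n + 1) w f) :
    WeightedMihlin n (w + 1) (derivWithin f {0}ᶜ) := by
  obtain ⟨hcd, K, hK0, hK⟩ := hf
  refine ⟨hcd.derivWithin isOpen_compl_singleton.uniqueDiffOn (by exact_mod_cast le_rfl), K, hK0,
    fun i hi t ht => ?_⟩
  rw [← iteratedDerivWithin_succ', show w + 1 + (i : ℤ) = w + (i + 1 : ℕ) by push_cast; ring]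
  exact hK (i + 1) (Nat.succ_le_succ hi) t ht

end WeightedMihlin

theorem weightedMihlin_pow (n m : ℕ) : WeightedMihlin n (-m) (fun t : ℝ => t ^ m) := by
  refine ⟨contDiff_id.pow m |>.contDiffOn, (m + 1) ^ n, by positivity, fun i hi t ht => ?_⟩
  simp only [iteratedDerivWithin_pow ht isOpen_compl_singleton.uniqueDiffOn, norm_mul, norm_pow,
    Real.norm_eq_abs, Nat.abs_cast]
  have hdesc : (m.descFactorial i : ℝ) ≤ (m + 1) ^ n := by
    exact_mod_cast (m.descFactorial_le_pow i).trans
      ((Nat.pow_le_pow_left m.le_succ i).trans (Nat.pow_le_pow_right m.succ_pos hi))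
  rcases le_or_gt i m with him | him
  · have hone : |t| ^ (-(m : ℤ) + i) * |t| ^ (m - i) = 1 := by
      rw [← zpow_natCast, ← zpow_add₀ (abs_pos.2 ht).ne', Nat.cast_sub him]; simp
    calc |t| ^ (-(m : ℤ) + i) * ((m.descFactorial i : ℝ) * |t| ^ (m - i))
        = m.descFactorial i := by rw [mul_left_comm, hone, mul_one]
      _ ≤ (m + 1) ^ n := hdesc
  · rw [Nat.descFactorial_eq_zero_iff_lt.2 him]; simp; positivity

end WeightedMihlin

section LinearMaps

variable {𝕜 : Type*} [NontriviallyNormedField 𝕜] [NormedAlgebra ℝ 𝕜]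
  {E F G : Type*} [NormedAddCommGroup E] [NormedSpace 𝕜 E]
  [NormedAddCommGroup F] [NormedSpace 𝕜 F] [NormedSpace ℝ F] [IsScalarTower ℝ 𝕜 F]
  [NormedAddCommGroup G] [NormedSpace 𝕜 G] [NormedSpace ℝ G] [IsScalarTower ℝ 𝕜 G]
  {n : ℕ} {w w₁ w₂ : ℤ}

variable (𝕜 E F G) in
def compRL : (F →L[𝕜] G) →L[ℝ] (E →L[𝕜] F) →L[ℝ] (E →L[𝕜] G) :=
  (restrictScalarsL 𝕜 (E →L[𝕜] F) (E →L[𝕜] G) ℝ ℝ).comp ((compL 𝕜 E F G).restrictScalars ℝ)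

theorem WeightedMihlin.comp {f : ℝ → F →L[𝕜] G} {g : ℝ → E →L[𝕜] F}
    (hf : WeightedMihlin n w₁ f) (hg : WeightedMihlin n w₂ g) (hw : w₁ + w₂ = w) :
    WeightedMihlin n w (fun t => (f t).comp (g t)) :=
  hf.bilinear (compRL 𝕜 E F G) hg hw

theorem HasDerivWithinAt.const_clm_comp (L : F →L[𝕜] G) {f : ℝ → E →L[𝕜] F} {f' : E →L[𝕜] F}
    {s : Set ℝ} {t : ℝ} (hf : HasDerivWithinAt f f' s t) :
    HasDerivWithinAt (fun t => L.comp (f t)) (L.comp f') s t :=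
  (compRL 𝕜 E F G L).hasFDerivAt.comp_hasDerivWithinAt t hf

theorem ContDiffOn.const_clm_comp (L : F →L[𝕜] G) {f : ℝ → E →L[𝕜] F} {N : WithTop ℕ∞}
    {s : Set ℝ} (hf : ContDiffOn ℝ N f s) : ContDiffOn ℝ N (fun t => L.comp (f t)) s :=
  (compRL 𝕜 E F G L).contDiff.comp_contDiffOn hf

variable [NormedSpace ℝ E] [IsScalarTower ℝ 𝕜 E]

theorem WeightedMihlin.smul {φ : ℝ → 𝕜} {f : ℝ → E} (hφ : WeightedMihlin n w₁ φ)
    (hf : WeightedMihlin n w₂ f) (hw : w₁ + w₂ = w) :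
    WeightedMihlin n w (fun t => φ t • f t) :=
  hφ.bilinear (lsmul ℝ 𝕜) hf hw

theorem WeightedMihlin.const_smul (c : 𝕜) {f : ℝ → E} (hf : WeightedMihlin n w f) :
    WeightedMihlin n w (fun t => c • f t) :=
  hf.clm_apply (lsmul ℝ 𝕜 c)

theorem WeightedMihlin.succ_of_hasDerivWithinAt {f : ℝ → F →L[𝕜] E} {g : ℝ → F →L[𝕜] F}
    (hf : WeightedMihlin n w f) (hg : WeightedMihlin n 1 g)
    (hcd : ContDiffOn ℝ ((n + 1 : ℕ) : ℕ∞) f {0}ᶜ)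
    (hf' : ∀ t ∈ ({0}ᶜ : Set ℝ), HasDerivWithinAt f (-(f t).comp (g t)) {0}ᶜ t) :
    WeightedMihlin (n + 1) w f :=
  hf.succ ((hf.comp hg rfl).neg.congr fun t ht =>
    ((hf' t ht).derivWithin (isOpen_compl_singleton.uniqueDiffOn t ht)).symm) hcd

theorem hasDerivWithinAt_of_comp_eq_id {a : ℝ → F →L[𝕜] E} {b : ℝ → E →L[𝕜] F}
    {b' : E →L[𝕜] F} {s : Set ℝ} {t : ℝ} (hs : UniqueDiffWithinAt ℝ s t) (ht : t ∈ s)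
    (ha : DifferentiableWithinAt ℝ a s t) (hb : HasDerivWithinAt b b' s t)
    (hab : ∀ u ∈ s, (a u).comp (b u) = .id 𝕜 E) (hba : (b t).comp (a t) = .id 𝕜 F) :
    HasDerivWithinAt a (-(a t).comp (b'.comp (a t))) s t := by
  set a' := derivWithin a s t
  have hprod : HasDerivWithinAt (fun u => (a u).comp (b u)) ((a t).comp b' + a'.comp (b t)) s t :=
    (compRL 𝕜 E F E).hasDerivWithinAt_of_bilinear ha.hasDerivWithinAt hb
  have hconst : HasDerivWithinAt (fun u => (a u).comp (b u)) 0 s t :=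
    (hasDerivWithinAt_const t s (ContinuousLinearMap.id 𝕜 E)).congr hab (hab t ht)
  have hsum : (a t).comp b' + a'.comp (b t) = 0 := hs.eq_deriv s hprod hconst
  have ha' : -(a t).comp (b'.comp (a t)) = a' := by
    rw [← comp_assoc, eq_neg_of_add_eq_zero_left hsum, neg_comp, neg_neg, comp_assoc, hba,
      comp_id]
  exact ha' ▸ ha.hasDerivWithinAt

theorem ContDiffOn.of_comp_eq_id [CompleteSpace E] {a : ℝ → F →L[𝕜] E} {b : ℝ → E →L[𝕜] F}
    {N : WithTop ℕ∞} {s : Set ℝ} (hs : IsOpen s) (hb : ContDiffOn ℝ N b s)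
    (hinv : ∀ t ∈ s, (b t).comp (a t) = .id 𝕜 F ∧ (a t).comp (b t) = .id 𝕜 E) :
    ContDiffOn ℝ N a s := by
  let e : ∀ t ∈ s, E ≃L[𝕜] F := fun t ht =>
    .equivOfInverse' (b t) (a t) (hinv t ht).1 (hinv t ht).2
  have ha : EqOn a (fun t => inverse (b t)) s := fun t ht => by
    change a t = inverse (e t ht : E →L[𝕜] F)
    rw [inverse_equiv]; rfl
  refine ContDiffOn.congr (fun t ht => ?_) ha
  have hinvAt := (contDiffAt_map_inverse (n := N) (e t ht)).restrict_scalars ℝ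
  exact (hinvAt.comp t (hb.contDiffAt (hs.mem_nhds ht))).contDiffWithinAt

end LinearMaps

section QuadraticPencil

variable {E : Type*} [NormedAddCommGroup E] [NormedSpace ℂ E]

def quadraticPencil (P B A : E) (c : ℝ → E) (t : ℝ) : E :=
  (-(t : ℂ) ^ 2) • P + (Complex.I * t) • B + A + c t

theorem hasDerivWithinAt_quadraticPencil (P B A : E) {c : ℝ → E} {c' : E} {s : Set ℝ} {t : ℝ}
    (hc : HasDerivWithinAt c c' s t) :
    HasDerivWithinAt (quadraticPencil P B A c) ((-2 * t : ℂ) • P + Complex.I • B + c') s t := by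
  have hsq : HasDerivAt (fun t : ℝ => -(t : ℂ) ^ 2) (-2 * t) t := by
    refine ((hasDerivAt_id t).ofReal_comp.pow 2).neg.congr_deriv ?_
    simp only [id, Complex.ofReal_one, mul_one]; ring
  have hlin : HasDerivAt (fun t : ℝ => Complex.I * t) Complex.I t := by
    simpa using (hasDerivAt_id t).ofReal_comp.const_mul Complex.I
  exact (((hsq.smul_const P).add (hlin.smul_const B)).hasDerivWithinAt.add_const A).add hc

theorem ContDiffOn.quadraticPencil (P B A : E) {c : ℝ → E} {N : WithTop ℕ∞} {s : Set ℝ}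
    (hc : ContDiffOn ℝ N c s) : ContDiffOn ℝ N (quadraticPencil P B A c) s := by
  have hof : ContDiff ℝ N (fun t : ℝ => (t : ℂ)) := Complex.ofRealCLM.contDiff
  exact ((((hof.pow 2).neg.smul contDiff_const).add ((contDiff_const.mul hof).smul
    contDiff_const)).add contDiff_const).contDiffOn.add hc

end QuadraticPencil

section InverseQuadraticPencil

variable {X Y : Type*} [NormedAddCommGroup X] [NormedSpace ℂ X]
  [NormedAddCommGroup Y] [NormedSpace ℂ Y] (A B P : Y →L[ℂ] X) {c : ℝ → Y →L[ℂ] X}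
  {a : ℝ → X →L[ℂ] Y}

theorem hasDerivWithinAt_inverse_quadraticPencil (hc : DifferentiableOn ℝ c {0}ᶜ)
    (ha : DifferentiableOn ℝ a {0}ᶜ)
    (hinv : ∀ t : ℝ, t ≠ 0 → (quadraticPencil P B A c t).comp (a t) = .id ℂ X ∧
      (a t).comp (quadraticPencil P B A c t) = .id ℂ Y) {t : ℝ} (ht : t ≠ 0) :
    HasDerivWithinAt a (-(a t).comp ((-2 * t : ℂ) • P.comp (a t) + Complex.I • B.comp (a t)
      + (derivWithin c {0}ᶜ t).comp (a t))) {0}ᶜ t := by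
  simpa only [add_comp, smul_comp] using hasDerivWithinAt_of_comp_eq_id
    (isOpen_compl_singleton.uniqueDiffOn t ht) ht (ha t ht)
    (hasDerivWithinAt_quadraticPencil P B A (hc t ht).hasDerivWithinAt)
    (fun u hu => (hinv u hu).2) (hinv t ht).1

theorem weightedMihlin_inverse_quadraticPencil [CompleteSpace Y] {γ : ℕ} (hc : MihlinCond γ c)
    (hinv : ∀ t : ℝ, t ≠ 0 → (quadraticPencil P B A c t).comp (a t) = .id ℂ X ∧
      (a t).comp (quadraticPencil P B A c t) = .id ℂ Y)
    {K : ℝ} (ha : ∀ t : ℝ, t ≠ 0 → ‖a t‖ ≤ K)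
    (ha0 : ∀ t : ℝ, t ≠ 0 → |t| * ‖B.comp (a t)‖ ≤ K)
    (ha1 : ∀ t : ℝ, t ≠ 0 → t ^ 2 * ‖P.comp (a t)‖ ≤ K) :
    WeightedMihlin γ 0 a ∧ WeightedMihlin γ 1 (fun t => B.comp (a t)) ∧
      WeightedMihlin γ 2 (fun t => P.comp (a t)) := by
  have hcW := mihlinCond_iff_weightedMihlin.1 hc
  have ha_cd : ContDiffOn ℝ (γ : ℕ∞) a {0}ᶜ :=
    (hc.1.quadraticPencil P B A).of_comp_eq_id isOpen_compl_singleton hinv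
  -- `g = b' a` for the pencil `b`, so that `a' = -a g`
  set g : ℝ → X →L[ℂ] X := fun t => (-2 * t : ℂ) • P.comp (a t) + Complex.I • B.comp (a t)
    + (derivWithin c {0}ᶜ t).comp (a t)
  have key : ∀ m ≤ γ, WeightedMihlin m 0 a ∧ WeightedMihlin m 1 (fun t => B.comp (a t)) ∧
      WeightedMihlin m 2 (fun t => P.comp (a t)) := by
    intro m
    induction m with
    | zero =>
      intro _
      exact ⟨.of_bound ha_cd.continuousOn (by simpa using ha),
        .of_bound (ha_cd.const_clm_comp B).continuousOn (by simpa using ha0),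
        .of_bound (ha_cd.const_clm_comp P).continuousOn (by simpa [sq_abs] using ha1)⟩
    | succ m ih =>
      intro hm
      obtain ⟨h0, h1, h2⟩ := ih (by omega)
      have hcoeff : WeightedMihlin m (-1) (fun t : ℝ => (-2 * t : ℂ)) :=
        ((weightedMihlin_pow m 1).clm_apply ((-2 : ℂ) • Complex.ofRealCLM)).congr
          fun t _ => by simp
      have hg : WeightedMihlin m 1 g :=
        ((hcoeff.smul h2 (by norm_num)).add (h1.const_smul Complex.I)).add
          ((hcW.mono hm).derivWithin.comp h0 (by norm_num))
      have hcd : ContDiffOn ℝ ((m + 1 : ℕ) : ℕ∞) a {0}ᶜ := ha_cd.of_le (by exact_mod_cast hm)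
      have hγ : (γ : WithTop ℕ∞) ≠ 0 := by exact_mod_cast (show γ ≠ 0 by omega)
      have hda : ∀ t ∈ ({0}ᶜ : Set ℝ), HasDerivWithinAt a (-(a t).comp (g t)) {0}ᶜ t :=
        fun t ht => hasDerivWithinAt_inverse_quadraticPencil A B P (hc.1.differentiableOn hγ)
          (ha_cd.differentiableOn hγ) hinv ht
      have hLa (L : Y →L[ℂ] X) : ∀ t ∈ ({0}ᶜ : Set ℝ),
          HasDerivWithinAt (fun t => L.comp (a t)) (-(L.comp (a t)).comp (g t)) {0}ᶜ t :=
        fun t ht => by simpa only [comp_neg, comp_assoc] using (hda t ht).const_clm_comp L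
      exact ⟨h0.succ_of_hasDerivWithinAt hg hcd hda,
        h1.succ_of_hasDerivWithinAt hg (hcd.const_clm_comp B) (hLa B),
        h2.succ_of_hasDerivWithinAt hg (hcd.const_clm_comp P) (hLa P)⟩
  exact key γ le_rfl

end InverseQuadraticPencil

theorem statement12_general (X Y : Type*)
    [NormedAddCommGroup X] [NormedSpace ℂ X]
    [NormedAddCommGroup Y] [NormedSpace ℂ Y] [CompleteSpace Y]
    (A B P : Y →L[ℂ] X) (γ : ℕ) (c : ℝ → Y →L[ℂ] X)
    (hc : MihlinCond γ c)
    (a : ℝ → X →L[ℂ] Y)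
    (hinv : ∀ t : ℝ, t ≠ 0 →
      ((-(t:ℂ) ^ 2) • P + (Complex.I * (t:ℂ)) • B + A + c t).comp (a t) =
          ContinuousLinearMap.id ℂ X ∧
        (a t).comp ((-(t:ℂ) ^ 2) • P + (Complex.I * (t:ℂ)) • B + A + c t) =
          ContinuousLinearMap.id ℂ Y)
    (Ka : ℝ)
    (ha : ∀ t : ℝ, t ≠ 0 → ‖a t‖ ≤ Ka)
    (ha0 : ∀ t : ℝ, t ≠ 0 → |t| * ‖B.comp (a t)‖ ≤ Ka)
    (ha1 : ∀ t : ℝ, t ≠ 0 → t ^ 2 * ‖P.comp (a t)‖ ≤ Ka) :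
    MihlinCond γ a ∧
    MihlinCond γ (fun t : ℝ => t • (B.comp (a t))) ∧
    MihlinCond γ (fun t : ℝ => (t ^ 2 : ℝ) • (P.comp (a t))) := by
  obtain ⟨h0, h1, h2⟩ := weightedMihlin_inverse_quadraticPencil A B P hc hinv ha ha0 ha1
  refine ⟨mihlinCond_iff_weightedMihlin.2 h0, mihlinCond_iff_weightedMihlin.2 ?_,
    mihlinCond_iff_weightedMihlin.2 ?_⟩
  · exact ((weightedMihlin_pow γ 1).smul h1 (by norm_num)).congr fun t _ => by simp
  · exact (weightedMihlin_pow γ 2).smul h2 (by norm_num)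

/-- Let `Y ↪ X` be Banach spaces, `A, B, P ∈ L(Y,X)`, `γ ∈ ℕ`, and suppose
`ĉ ∈ C^γ(ℝ∖{0}; L(Y,X))` satisfies the `𝔐_γ`-condition. If `b(t) = −t²P + itB + A + ĉ(t)` is
invertible for `t ≠ 0`, `a = b⁻¹` is bounded in `L(X,Y)`, and `a₀(t) = tBa(t)`,
`a₁(t) = t²Pa(t)` are bounded in `L(X)`, then `a` satisfies the `𝔐_γ`-condition in `L(X,Y)`
and `a₀, a₁` satisfy the `𝔐_γ`-condition in `L(X)`. -/
theorem statement12 (X Y : Type*)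
    [NormedAddCommGroup X] [NormedSpace ℂ X] [CompleteSpace X]
    [NormedAddCommGroup Y] [NormedSpace ℂ Y] [CompleteSpace Y]
    (J : Y →L[ℂ] X) (hJ : Function.Injective J)
    (A B P : Y →L[ℂ] X) (γ : ℕ) (c : ℝ → Y →L[ℂ] X)
    (hc : MihlinCond γ c)
    (a : ℝ → X →L[ℂ] Y)
    (hinv : ∀ t : ℝ, t ≠ 0 →
      ((-(t:ℂ) ^ 2) • P + (Complex.I * (t:ℂ)) • B + A + c t).comp (a t) =
          ContinuousLinearMap.id ℂ X ∧
        (a t).comp ((-(t:ℂ) ^ 2) • P + (Complex.I * (t:ℂ)) • B + A + c t) =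
          ContinuousLinearMap.id ℂ Y)
    (Ka : ℝ)
    (ha : ∀ t : ℝ, t ≠ 0 → ‖a t‖ ≤ Ka)
    (ha0 : ∀ t : ℝ, t ≠ 0 → |t| * ‖B.comp (a t)‖ ≤ Ka)
    (ha1 : ∀ t : ℝ, t ≠ 0 → t ^ 2 * ‖P.comp (a t)‖ ≤ Ka) :
    MihlinCond γ a ∧
    MihlinCond γ (fun t : ℝ => t • (B.comp (a t))) ∧
    MihlinCond γ (fun t : ℝ => (t ^ 2 : ℝ) • (P.comp (a t))) :=
  statement12_general X Y A B P γ c hc a hinv Ka ha ha0 ha1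
end
end
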